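/- arXiv:2303.10773 — 8 statements merged into one kernel-verified Lean document; each statement's English description precedes it below -/
import Mathlib

section
/- If ρ is a good volume potential on V and τ is any 3-chain on V, then ρ(∂τ) ≤ ‖τ‖₁, where ρ(∂τ) denotes the ℤ-linear extension of ρ to 2-chains. -/
noncomputable section

/-- A *volume potential* on a vertex type `V` assigns a rational number to each
ordered triple of distinct vertices, with `ρ(A,B,C) = ρ(B,C,A) = -ρ(A,C,B)`. -/
structure VolumePotential (V : Type*) where
  ρ : V → V → V → ℚ
  cyclic : ∀ A B C : V, A ≠ B → A ≠ C → B ≠ C → ρ A B C = ρ B C A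
  antisymm : ∀ A B C : V, A ≠ B → A ≠ C → B ≠ C → ρ A B C = -ρ A C B

variable {V : Type*} [DecidableEq V]

/-- The volume form of a volume potential:
`vol_ρ(A,B,C,D) = ρ(B,C,D) − ρ(A,C,D) + ρ(A,B,D) − ρ(A,B,C)`. -/
def VolumePotential.vol (P : VolumePotential V) (A B C D : V) : ℚ :=
  P.ρ B C D - P.ρ A C D + P.ρ A B D - P.ρ A B C

/-- A volume potential is *good* if its volume form assigns every ordered
4-tuple of distinct vertices volume at most 1. -/
def VolumePotential.Good (P : VolumePotential V) : Prop :=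
  ∀ A B C D : V, A ≠ B → A ≠ C → A ≠ D → B ≠ C → B ≠ D → C ≠ D →
    P.vol A B C D ≤ 1

/-- A 2-chain on `V`: a finitely supported alternating integer-valued function on
ordered triples (this encodes a finitely supported `ℤ`-linear combination of
oriented triangles, an oriented triangle being an ordered triple of distinct
vertices up to even permutation, with orientation reversal acting as negation). -/
def IsChain2 (c : V → V → V → ℤ) : Prop :=
  (∀ A B C, c A B C = -c B A C) ∧ (∀ A B C, c A B C = -c A C B) ∧
  {t : V × V × V | c t.1 t.2.1 t.2.2 ≠ 0}.Finite

/-- A 3-chain on `V`: a finitely supported alternating integer-valued function on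
ordered 4-tuples (a finitely supported `ℤ`-linear combination of oriented
tetrahedra). -/
def IsChain3 (c : V → V → V → V → ℤ) : Prop :=
  (∀ A B C D, c A B C D = -c B A C D) ∧ (∀ A B C D, c A B C D = -c A C B D) ∧
  (∀ A B C D, c A B C D = -c A B D C) ∧
  {t : V × V × V × V | c t.1 t.2.1 t.2.2.1 t.2.2.2 ≠ 0}.Finite

/-- The boundary of a 2-chain, a 1-chain: `∂[A,B,C] = [B,C] − [A,C] + [A,B]`,
extended `ℤ`-linearly. -/
def bdry2 (c : V → V → V → ℤ) : V → V → ℤ := fun B C => ∑ᶠ A, c A B C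

/-- The boundary of a 3-chain, a 2-chain:
`∂[A,B,C,D] = [B,C,D] − [A,C,D] + [A,B,D] − [A,B,C]`, extended `ℤ`-linearly. -/
def bdry3 (c : V → V → V → V → ℤ) : V → V → V → ℤ := fun B C D => ∑ᶠ A, c A B C D

/-- The `ℤ`-linear extension of a volume potential to 2-chains.  (Each oriented
triangle of the chain occurs as 6 ordered triples, 3 with each sign, whence the
division by 6.) -/
def VolumePotential.eval2 (P : VolumePotential V) (c : V → V → V → ℤ) : ℚ :=
  (∑ᶠ t : V × V × V, (c t.1 t.2.1 t.2.2 : ℚ) * P.ρ t.1 t.2.1 t.2.2) / 6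

/-- The `ℤ`-linear extension of the volume form to 3-chains. -/
def VolumePotential.eval3 (P : VolumePotential V) (c : V → V → V → V → ℤ) : ℚ :=
  (∑ᶠ t : V × V × V × V,
    (c t.1 t.2.1 t.2.2.1 t.2.2.2 : ℚ) * P.vol t.1 t.2.1 t.2.2.1 t.2.2.2) / 24

/-- The ℓ¹-norm of a 3-chain: the sum of the absolute values of its coefficients. -/
def l1norm3 (c : V → V → V → V → ℤ) : ℚ :=
  (∑ᶠ t : V × V × V × V, (|c t.1 t.2.1 t.2.2.1 t.2.2.2| : ℚ)) / 24

/-! Stokes: `ρ(∂τ) = vol_ρ(τ)`. Each of the four face terms of `vol_ρ(A,B,C,D)` is the face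
`ρ(B,C,D)` evaluated at a permutation of `(A,B,C,D)`, and reindexing the sum by that permutation
only multiplies `τ` by the sign, so `vol_ρ(τ)` is four copies of `ρ(∂τ)` (the normalisations
`1/24` and `1/6` absorb the factor). Since `vol_ρ` is alternating, goodness gives
`|vol_ρ| ≤ 1` on nondegenerate tetrahedra, while `τ` vanishes on degenerate ones, so
`vol_ρ(τ) ≤ ‖τ‖₁` term by term. -/

theorem finsum_mul_comp_equiv_of_forall_eq_mul {α R : Type*} [Semiring R] {c : α → R}
    (hc : c.HasFiniteSupport) (e : α ≃ α) {ε : R} (hce : ∀ t, c t = ε * c (e t)) (g : α → R) :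
    ∑ᶠ t, c t * g (e t) = ε * ∑ᶠ t, c t * g t := by
  calc ∑ᶠ t, c t * g (e t) = ∑ᶠ t, ε * (c (e t) * g (e t)) :=
        finsum_congr fun t => by rw [hce t, mul_assoc]
    _ = ∑ᶠ t, ε * (c t * g t) := finsum_comp_equiv e (f := fun s => ε * (c s * g s))
    _ = ε * ∑ᶠ t, c t * g t := (mul_finsum' _ ε (hc.fun_mul_left g)).symm

theorem finsum_finsum_mul_eq_finsum_prod {α β R : Type*} [NonUnitalNonAssocSemiring R]
    [NoZeroDivisors R] {c : α × β → R} (hc : c.HasFiniteSupport) (g : β → R) :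
    ∑ᶠ b, (∑ᶠ a, c (a, b)) * g b = ∑ᶠ x : α × β, c x * g x.2 := by
  have hc' : (fun y : β × α => c y.swap * g y.1).HasFiniteSupport :=
    (hc.comp_of_injective Prod.swap_injective).fun_mul_left _
  calc ∑ᶠ b, (∑ᶠ a, c (a, b)) * g b = ∑ᶠ (b) (a), c (a, b) * g b :=
        finsum_congr fun b => finsum_mul _ _
    _ = ∑ᶠ y : β × α, c y.swap * g y.1 := (finsum_curry _ hc').symm
    _ = ∑ᶠ x : α × β, c x * g x.2 :=
        finsum_comp_equiv (Equiv.prodComm β α) (f := fun x => c x * g x.2)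

namespace IsChain3

variable {V : Type*} {τ : V → V → V → V → ℤ}

theorem hasFiniteSupport (hτ : IsChain3 τ) :
    (fun t : V × V × V × V => (τ t.1 t.2.1 t.2.2.1 t.2.2.2 : ℚ)).HasFiniteSupport :=
  hτ.2.2.2.subset fun _ ht h0 => ht (by simp [h0])

theorem pairwise_ne_of_ne_zero (hτ : IsChain3 τ) {A B C D : V} (h : τ A B C D ≠ 0) :
    A ≠ B ∧ A ≠ C ∧ A ≠ D ∧ B ≠ C ∧ B ≠ D ∧ C ≠ D := by
  obtain ⟨h01, h12, h23, -⟩ := hτ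
  refine ⟨?_, ?_, ?_, ?_, ?_, ?_⟩ <;> rintro rfl <;> apply h <;> grind

end IsChain3

namespace VolumePotential

variable {V : Type*} (P : VolumePotential V)

theorem vol_swap_left {A B C D : V} (hAB : A ≠ B) (hAC : A ≠ C) (hAD : A ≠ D) (hBC : B ≠ C)
    (hBD : B ≠ D) : P.vol B A C D = -P.vol A B C D := by
  have hABD : P.ρ B A D = -P.ρ A B D := by
    rw [P.cyclic B A D hAB.symm hBD hAD, P.antisymm A D B hAD hAB hBD.symm]
  have hABC : P.ρ B A C = -P.ρ A B C := by
    rw [P.cyclic B A C hAB.symm hBC hAC, P.antisymm A C B hAC hAB hBC.symm]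
  simp only [vol, hABD, hABC]
  ring

theorem Good.abs_vol_le_one {P : VolumePotential V} (hP : P.Good) {A B C D : V} (hAB : A ≠ B)
    (hAC : A ≠ C) (hAD : A ≠ D) (hBC : B ≠ C) (hBD : B ≠ D) (hCD : C ≠ D) :
    |P.vol A B C D| ≤ 1 := by
  have hBA := hP B A C D hAB.symm hBC hBD hAC hAD hCD
  rw [P.vol_swap_left hAB hAC hAD hBC hBD] at hBA
  exact abs_le.2 ⟨by linarith, hP A B C D hAB hAC hAD hBC hBD hCD⟩

theorem eval2_bdry3 {τ : V → V → V → V → ℤ} (hτ : IsChain3 τ) :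
    P.eval2 (bdry3 τ) = P.eval3 τ := by
  set c : V × V × V × V → ℚ := fun t => τ t.1 t.2.1 t.2.2.1 t.2.2.2
  have hc : c.HasFiniteSupport := hτ.hasFiniteSupport
  set face : V × V × V × V → ℚ := fun t => P.ρ t.2.1 t.2.2.1 t.2.2.2
  have hACD : ∑ᶠ t, c t * P.ρ t.1 t.2.2.1 t.2.2.2 = -∑ᶠ t, c t * face t := by
    simpa using finsum_mul_comp_equiv_of_forall_eq_mul hc (ε := -1)
      ⟨fun t => (t.2.1, t.1, t.2.2), fun t => (t.2.1, t.1, t.2.2), fun _ => rfl, fun _ => rfl⟩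
      (fun ⟨A, B, C, D⟩ => by simp [c, hτ.1 A B C D]) face
  have hABD : ∑ᶠ t, c t * P.ρ t.1 t.2.1 t.2.2.2 = ∑ᶠ t, c t * face t := by
    simpa using finsum_mul_comp_equiv_of_forall_eq_mul hc (ε := 1)
      ⟨fun t => (t.2.2.1, t.1, t.2.1, t.2.2.2), fun t => (t.2.1, t.2.2.1, t.1, t.2.2.2),
        fun _ => rfl, fun _ => rfl⟩
      (fun ⟨A, B, C, D⟩ => by simp [c, hτ.1 C A B D, hτ.2.1 A C B D]) face
  have hABC : ∑ᶠ t, c t * P.ρ t.1 t.2.1 t.2.2.1 = -∑ᶠ t, c t * face t := by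
    simpa using finsum_mul_comp_equiv_of_forall_eq_mul hc (ε := -1)
      ⟨fun t => (t.2.2.2, t.1, t.2.1, t.2.2.1), fun t => (t.2.1, t.2.2.1, t.2.2.2, t.1),
        fun _ => rfl, fun _ => rfl⟩
      (fun ⟨A, B, C, D⟩ => by simp [c, hτ.1 D A B C, hτ.2.1 A D B C, hτ.2.2.1 A B D C]) face
  have hvol : ∑ᶠ t, c t * P.vol t.1 t.2.1 t.2.2.1 t.2.2.2 = 4 * ∑ᶠ t, c t * face t := by
    simp only [vol, mul_sub, mul_add]
    rw [finsum_sub_distrib (by fun_prop) (by fun_prop),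
      finsum_add_distrib (by fun_prop) (by fun_prop),
      finsum_sub_distrib (by fun_prop) (by fun_prop), hACD, hABD, hABC]
    ring
  have hbdry : ∑ᶠ p : V × V × V, ((bdry3 τ p.1 p.2.1 p.2.2 : ℤ) : ℚ) * P.ρ p.1 p.2.1 p.2.2 =
      ∑ᶠ t, c t * face t := by
    refine .trans (finsum_congr fun p => ?_)
      (finsum_finsum_mul_eq_finsum_prod hc fun p : V × V × V => P.ρ p.1 p.2.1 p.2.2)
    exact congrArg (· * _)
      ((Int.castAddHom ℚ).map_finsum_of_injective Int.cast_injective fun A => τ A _ _ _)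
  rw [eval2, eval3, hbdry, hvol]
  ring

theorem Good.eval3_le_l1norm3 {P : VolumePotential V} (hP : P.Good) {τ : V → V → V → V → ℤ}
    (hτ : IsChain3 τ) : P.eval3 τ ≤ l1norm3 τ := by
  have hterm : ∀ t : V × V × V × V, (τ t.1 t.2.1 t.2.2.1 t.2.2.2 : ℚ) *
      P.vol t.1 t.2.1 t.2.2.1 t.2.2.2 ≤ |(τ t.1 t.2.1 t.2.2.1 t.2.2.2 : ℚ)| := by
    rintro ⟨A, B, C, D⟩
    by_cases h0 : τ A B C D = 0
    · simp [h0]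
    obtain ⟨hAB, hAC, hAD, hBC, hBD, hCD⟩ := hτ.pairwise_ne_of_ne_zero h0
    calc (τ A B C D : ℚ) * P.vol A B C D ≤ |(τ A B C D : ℚ)| * |P.vol A B C D| :=
          (le_abs_self _).trans (abs_mul _ _).le
      _ ≤ |(τ A B C D : ℚ)| :=
          mul_le_of_le_one_right (abs_nonneg _) (hP.abs_vol_le_one hAB hAC hAD hBC hBD hCD)
  unfold eval3 l1norm3
  gcongr ?_ / _
  exact finsum_le_finsum' (hτ.hasFiniteSupport.fun_mul_left _)
    (hτ.hasFiniteSupport.fun_comp abs_zero) hterm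

end VolumePotential

theorem good_bdry_le_l1norm_general {V : Type*} (P : VolumePotential V)
    (hP : P.Good) (τ : V → V → V → V → ℤ) (hτ : IsChain3 τ) :
    P.eval2 (bdry3 τ) ≤ l1norm3 τ :=
  calc P.eval2 (bdry3 τ) = P.eval3 τ := P.eval2_bdry3 hτ
    _ ≤ l1norm3 τ := hP.eval3_le_l1norm3 hτ

/-- If `ρ` is a good volume potential and `τ` is any 3-chain, then
`ρ(∂τ) ≤ ‖τ‖₁`. -/
theorem good_bdry_le_l1norm {V : Type*} [DecidableEq V] (P : VolumePotential V)
    (hP : P.Good) (τ : V → V → V → V → ℤ) (hτ : IsChain3 τ) :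
    P.eval2 (bdry3 τ) ≤ l1norm3 τ :=
  good_bdry_le_l1norm_general P hP τ hτ
end
end

section
/- If ρ is a good volume potential on V and τ is a tetration of a 2-chain σ, then |τ| ≥ ⌈ρ(σ)⌉ (the ceiling of the rational number ρ(σ)). In particular, if σ admits a tetration then tetvol(σ) ≥ ⌈ρ(σ)⌉. -/
noncomputable section

variable {V : Type*} [DecidableEq V]

/-- A *tetration* of a 2-chain `σ` is a 3-chain with all coefficients in `{0,1}`
(i.e. a finite set of oriented tetrahedra, with at most one orientation occurring
per 4-element vertex set — in the alternating-function encoding, all values lie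
in `{-1,0,1}`) whose boundary is `σ`. -/
def IsTetration (σ : V → V → V → ℤ) (τ : V → V → V → V → ℤ) : Prop :=
  IsChain3 τ ∧ (∀ A B C D, τ A B C D = 0 ∨ τ A B C D = 1 ∨ τ A B C D = -1) ∧
  bdry3 τ = σ

/-- `|τ|`: the number of tetrahedra of a `{0,1}`-coefficient 3-chain. -/
def tetCount (τ : V → V → V → V → ℤ) : ℕ :=
  {s : Finset V | ∃ A B C D, τ A B C D ≠ 0 ∧ s = ({A, B, C, D} : Finset V)}.ncard

/-- `tetvol σ`: the minimum number of tetrahedra in a tetration of `σ`. -/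
def tetvol (σ : V → V → V → ℤ) : ℕ :=
  sInf {n | ∃ τ : V → V → V → V → ℤ, IsTetration σ τ ∧ tetCount τ = n}

set_option linter.unusedSectionVars false
set_option linter.unusedVariables false

/-! ### Auxiliary lemmas -/

lemma chain3_distinct {τ : V → V → V → V → ℤ} (h : IsChain3 τ)
    {A B C D : V} (hne : τ A B C D ≠ 0) :
    A ≠ B ∧ A ≠ C ∧ A ≠ D ∧ B ≠ C ∧ B ≠ D ∧ C ≠ D := by
  obtain ⟨h1, h2, h3, -⟩ := h
  refine ⟨fun e => hne ?_, fun e => hne ?_, fun e => hne ?_,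
    fun e => hne ?_, fun e => hne ?_, fun e => hne ?_⟩ <;> subst e
  · have := h1 A A C D; omega
  · have := h2 A B A D; have := h1 A A B D; omega
  · have := h3 A B C A; have := h2 A B A C; have := h1 A A B C; omega
  · have := h2 A B B D; omega
  · have := h3 A B C B; have := h2 A B B C; omega
  · have := h3 A B C C; omega

lemma rho_swap12 (P : VolumePotential V) {A B C : V} (hAB : A ≠ B) (hAC : A ≠ C)
    (hBC : B ≠ C) : P.ρ B A C = -P.ρ A B C := by
  rw [P.antisymm B A C hAB.symm hBC hAC, P.cyclic A B C hAB hAC hBC]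

lemma vol_swap12 (P : VolumePotential V) {A B C D : V} (hAB : A ≠ B) (hAC : A ≠ C)
    (hAD : A ≠ D) (hBC : B ≠ C) (hBD : B ≠ D) (hCD : C ≠ D) :
    P.vol B A C D = -P.vol A B C D := by
  unfold VolumePotential.vol
  rw [rho_swap12 P hAB hAD hBD, rho_swap12 P hAB hAC hBC]
  ring

lemma sum4_swap01 (F : Finset V) (f : V → V → V → V → ℚ) :
    (∑ a ∈ F, ∑ b ∈ F, ∑ c ∈ F, ∑ d ∈ F, f a b c d)
      = ∑ a ∈ F, ∑ b ∈ F, ∑ c ∈ F, ∑ d ∈ F, f b a c d :=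
  Finset.sum_comm

lemma sum3_cycle (F : Finset V) (g : V → V → V → ℚ) :
    (∑ a ∈ F, ∑ b ∈ F, ∑ c ∈ F, g a b c)
      = ∑ a ∈ F, ∑ b ∈ F, ∑ c ∈ F, g c a b :=
  calc (∑ a ∈ F, ∑ b ∈ F, ∑ c ∈ F, g a b c)
      = ∑ a ∈ F, ∑ b ∈ F, ∑ c ∈ F, g b a c := Finset.sum_comm
    _ = ∑ a ∈ F, ∑ b ∈ F, ∑ c ∈ F, g c a b :=
      Finset.sum_congr rfl fun a _ => Finset.sum_comm

lemma sum4_cycle012 (F : Finset V) (f : V → V → V → V → ℚ) :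
    (∑ a ∈ F, ∑ b ∈ F, ∑ c ∈ F, ∑ d ∈ F, f a b c d)
      = ∑ a ∈ F, ∑ b ∈ F, ∑ c ∈ F, ∑ d ∈ F, f c a b d :=
  calc (∑ a ∈ F, ∑ b ∈ F, ∑ c ∈ F, ∑ d ∈ F, f a b c d)
      = ∑ a ∈ F, ∑ b ∈ F, ∑ c ∈ F, ∑ d ∈ F, f b a c d := Finset.sum_comm
    _ = ∑ a ∈ F, ∑ b ∈ F, ∑ c ∈ F, ∑ d ∈ F, f c a b d :=
      Finset.sum_congr rfl fun a _ => Finset.sum_comm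

lemma sum4_cycle0123 (F : Finset V) (f : V → V → V → V → ℚ) :
    (∑ a ∈ F, ∑ b ∈ F, ∑ c ∈ F, ∑ d ∈ F, f a b c d)
      = ∑ a ∈ F, ∑ b ∈ F, ∑ c ∈ F, ∑ d ∈ F, f d a b c :=
  calc (∑ a ∈ F, ∑ b ∈ F, ∑ c ∈ F, ∑ d ∈ F, f a b c d)
      = ∑ a ∈ F, ∑ b ∈ F, ∑ c ∈ F, ∑ d ∈ F, f b a c d := Finset.sum_comm
    _ = ∑ a ∈ F, ∑ b ∈ F, ∑ c ∈ F, ∑ d ∈ F, f d a b c :=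
      Finset.sum_congr rfl fun a _ => sum3_cycle F (fun x y z => f x a y z)

def tuplePerms (A B C D : V) : List (V × V × V × V) :=
  [(A,B,C,D),(A,B,D,C),(A,C,B,D),(A,C,D,B),(A,D,B,C),(A,D,C,B),
   (B,A,C,D),(B,A,D,C),(B,C,A,D),(B,C,D,A),(B,D,A,C),(B,D,C,A),
   (C,A,B,D),(C,A,D,B),(C,B,A,D),(C,B,D,A),(C,D,A,B),(C,D,B,A),
   (D,A,B,C),(D,A,C,B),(D,B,A,C),(D,B,C,A),(D,C,A,B),(D,C,B,A)]

lemma mem_tuplePerms {A B C D A' B' C' D' : V}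
    (h1 : A' ≠ B') (h2 : A' ≠ C') (h3 : A' ≠ D') (h4 : B' ≠ C') (h5 : B' ≠ D') (h6 : C' ≠ D')
    (hs : ({A', B', C', D'} : Finset V) = {A, B, C, D}) :
    (A', B', C', D') ∈ tuplePerms A B C D := by
  have mA : A' = A ∨ A' = B ∨ A' = C ∨ A' = D := by
    have : A' ∈ ({A,B,C,D} : Finset V) := hs ▸ (by simp)
    simpa using this
  have mB : B' = A ∨ B' = B ∨ B' = C ∨ B' = D := by
    have : B' ∈ ({A,B,C,D} : Finset V) := hs ▸ (by simp)
    simpa using this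
  have mC : C' = A ∨ C' = B ∨ C' = C ∨ C' = D := by
    have : C' ∈ ({A,B,C,D} : Finset V) := hs ▸ (by simp)
    simpa using this
  have mD : D' = A ∨ D' = B ∨ D' = C ∨ D' = D := by
    have : D' ∈ ({A,B,C,D} : Finset V) := hs ▸ (by simp)
    simpa using this
  clear hs
  rcases mA with rfl|rfl|rfl|rfl <;> rcases mB with rfl|rfl|rfl|rfl <;>
    rcases mC with rfl|rfl|rfl|rfl <;> rcases mD with rfl|rfl|rfl|rfl <;>
    simp_all [tuplePerms]

/-- If `ρ` is a good volume potential and `τ` is a tetration of a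
2-chain `σ`, then `|τ| ≥ ⌈ρ(σ)⌉`; in particular, if `σ` admits a tetration then
`tetvol(σ) ≥ ⌈ρ(σ)⌉`. -/
theorem good_tetration_lower_bound {V : Type*} [DecidableEq V] (P : VolumePotential V)
    (hP : P.Good) (σ : V → V → V → ℤ) :
    (∀ τ : V → V → V → V → ℤ, IsTetration σ τ → ⌈P.eval2 σ⌉ ≤ (tetCount τ : ℤ)) ∧
    ((∃ τ : V → V → V → V → ℤ, IsTetration σ τ) → ⌈P.eval2 σ⌉ ≤ (tetvol σ : ℤ)) := by
  have part1 : ∀ τ : V → V → V → V → ℤ, IsTetration σ τ → ⌈P.eval2 σ⌉ ≤ (tetCount τ : ℤ) := by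
    intro τ hτ
    obtain ⟨hch, h01, hbd⟩ := hτ
    subst hbd
    classical
    obtain ⟨c1, c2, c3, hfin⟩ := id hch
    set S3 : Finset (V × V × V × V) := hfin.toFinset with hS3def
    have hmemS3 : ∀ t : V × V × V × V, t ∈ S3 ↔ τ t.1 t.2.1 t.2.2.1 t.2.2.2 ≠ 0 :=
      fun t => hfin.mem_toFinset
    set F : Finset V := S3.image (fun t => t.1) ∪ S3.image (fun t => t.2.1) ∪
      S3.image (fun t => t.2.2.1) ∪ S3.image (fun t => t.2.2.2) with hFdef
    have hmemF : ∀ {A B C D : V}, τ A B C D ≠ 0 → A ∈ F ∧ B ∈ F ∧ C ∈ F ∧ D ∈ F := by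
      intro A B C D h
      have ht : (A,B,C,D) ∈ S3 := (hmemS3 _).2 h
      refine ⟨?_, ?_, ?_, ?_⟩ <;>
        simp only [hFdef, Finset.mem_union, Finset.mem_image]
      · exact Or.inl (Or.inl (Or.inl ⟨_, ht, rfl⟩))
      · exact Or.inl (Or.inl (Or.inr ⟨_, ht, rfl⟩))
      · exact Or.inl (Or.inr ⟨_, ht, rfl⟩)
      · exact Or.inr ⟨_, ht, rfl⟩
    set G : ℚ := ∑ a ∈ F, ∑ b ∈ F, ∑ c ∈ F, ∑ d ∈ F, (τ a b c d : ℚ) * P.ρ b c d with hGdef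
    have hbdry : ∀ B C D : V, bdry3 τ B C D = ∑ a ∈ F, τ a B C D := by
      intro B C D
      exact finsum_eq_sum_of_support_subset _
        (fun a ha => Finset.mem_coe.mpr (hmemF (Function.mem_support.mp ha)).1)
    -- eval2 of the boundary equals G/6
    have hG : P.eval2 (bdry3 τ) = G / 6 := by
      unfold VolumePotential.eval2
      have hsupp : (Function.support fun t : V × V × V =>
          ((bdry3 τ t.1 t.2.1 t.2.2 : ℤ) : ℚ) * P.ρ t.1 t.2.1 t.2.2) ⊆ ↑(F ×ˢ F ×ˢ F) := by
        intro t ht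
        have hb : bdry3 τ t.1 t.2.1 t.2.2 ≠ 0 := by
          intro h0
          apply ht
          simp [h0]
        have hex : ∃ a, τ a t.1 t.2.1 t.2.2 ≠ 0 := by
          by_contra hc
          push_neg at hc
          apply hb
          unfold bdry3
          simp [hc]
        obtain ⟨a, ha⟩ := hex
        have hm := hmemF ha
        simp only [Finset.coe_product, Set.mem_prod, Finset.mem_coe]
        exact ⟨hm.2.1, hm.2.2.1, hm.2.2.2⟩
      rw [finsum_eq_sum_of_support_subset _ hsupp]
      congr 1
      calc (∑ t ∈ F ×ˢ F ×ˢ F, ((bdry3 τ t.1 t.2.1 t.2.2 : ℤ) : ℚ) * P.ρ t.1 t.2.1 t.2.2)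
          = ∑ b ∈ F, ∑ c ∈ F, ∑ d ∈ F, ((bdry3 τ b c d : ℤ) : ℚ) * P.ρ b c d := by
            rw [Finset.sum_product]
            exact Finset.sum_congr rfl fun b _ => by exact Finset.sum_product _ _ _
        _ = ∑ a ∈ F, ∑ b ∈ F, ∑ c ∈ F, ∑ d ∈ F, (τ d a b c : ℚ) * P.ρ a b c := by
            refine Finset.sum_congr rfl fun b _ => Finset.sum_congr rfl fun c _ =>
              Finset.sum_congr rfl fun d _ => ?_
            rw [hbdry b c d]
            push_cast
            rw [Finset.sum_mul]
        _ = ∑ a ∈ F, ∑ b ∈ F, ∑ c ∈ F, ∑ d ∈ F, (τ c d a b : ℚ) * P.ρ d a b :=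
            sum4_cycle0123 F _
        _ = ∑ a ∈ F, ∑ b ∈ F, ∑ c ∈ F, ∑ d ∈ F, (τ b c d a : ℚ) * P.ρ c d a :=
            sum4_cycle0123 F _
        _ = G := sum4_cycle0123 F _
    -- the four reindexed pieces
    have e2 : (∑ a ∈ F, ∑ b ∈ F, ∑ c ∈ F, ∑ d ∈ F, -(τ a b c d : ℚ) * P.ρ a c d) = G :=
      calc (∑ a ∈ F, ∑ b ∈ F, ∑ c ∈ F, ∑ d ∈ F, -(τ a b c d : ℚ) * P.ρ a c d)
          = ∑ a ∈ F, ∑ b ∈ F, ∑ c ∈ F, ∑ d ∈ F, -(τ b a c d : ℚ) * P.ρ b c d :=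
            sum4_swap01 F _
        _ = G := by
            refine Finset.sum_congr rfl fun a _ => Finset.sum_congr rfl fun b _ =>
              Finset.sum_congr rfl fun c _ => Finset.sum_congr rfl fun d _ => ?_
            have h := c1 a b c d
            rw [h]
            push_cast
            ring
    have e3 : (∑ a ∈ F, ∑ b ∈ F, ∑ c ∈ F, ∑ d ∈ F, (τ a b c d : ℚ) * P.ρ a b d) = G :=
      calc (∑ a ∈ F, ∑ b ∈ F, ∑ c ∈ F, ∑ d ∈ F, (τ a b c d : ℚ) * P.ρ a b d)
          = ∑ a ∈ F, ∑ b ∈ F, ∑ c ∈ F, ∑ d ∈ F, (τ c a b d : ℚ) * P.ρ c a d :=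
            sum4_cycle012 F _
        _ = ∑ a ∈ F, ∑ b ∈ F, ∑ c ∈ F, ∑ d ∈ F, (τ b c a d : ℚ) * P.ρ b c d :=
            sum4_cycle012 F _
        _ = G := by
            refine Finset.sum_congr rfl fun a _ => Finset.sum_congr rfl fun b _ =>
              Finset.sum_congr rfl fun c _ => Finset.sum_congr rfl fun d _ => ?_
            have h : τ b c a d = -τ b a c d := c2 b c a d
            have h' : τ b a c d = -τ a b c d := by have := c1 a b c d; omega
            rw [h, h']
            push_cast
            ring
    have e4 : (∑ a ∈ F, ∑ b ∈ F, ∑ c ∈ F, ∑ d ∈ F, -(τ a b c d : ℚ) * P.ρ a b c) = G :=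
      calc (∑ a ∈ F, ∑ b ∈ F, ∑ c ∈ F, ∑ d ∈ F, -(τ a b c d : ℚ) * P.ρ a b c)
          = ∑ a ∈ F, ∑ b ∈ F, ∑ c ∈ F, ∑ d ∈ F, -(τ d a b c : ℚ) * P.ρ d a b :=
            sum4_cycle0123 F _
        _ = ∑ a ∈ F, ∑ b ∈ F, ∑ c ∈ F, ∑ d ∈ F, -(τ c d a b : ℚ) * P.ρ c d a :=
            sum4_cycle0123 F _
        _ = ∑ a ∈ F, ∑ b ∈ F, ∑ c ∈ F, ∑ d ∈ F, -(τ b c d a : ℚ) * P.ρ b c d :=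
            sum4_cycle0123 F _
        _ = G := by
            refine Finset.sum_congr rfl fun a _ => Finset.sum_congr rfl fun b _ =>
              Finset.sum_congr rfl fun c _ => Finset.sum_congr rfl fun d _ => ?_
            have h : τ b c d a = -τ a b c d := by
              have h1 := c3 b c d a
              have h2 := c2 b c a d
              have h3 := c1 a b c d
              omega
            rw [h]
            push_cast
            ring
    have hX : (∑ a ∈ F, ∑ b ∈ F, ∑ c ∈ F, ∑ d ∈ F, (τ a b c d : ℚ) * P.vol a b c d)
        = 4 * G := by
      have expand : ∀ a b c d : V, (τ a b c d : ℚ) * P.vol a b c d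
          = (τ a b c d : ℚ) * P.ρ b c d + -(τ a b c d : ℚ) * P.ρ a c d
            + (τ a b c d : ℚ) * P.ρ a b d + -(τ a b c d : ℚ) * P.ρ a b c := by
        intro a b c d
        unfold VolumePotential.vol
        ring
      simp only [expand, Finset.sum_add_distrib]
      rw [e2, e3, e4, ← hGdef]
      ring
    -- termwise bound
    have hterm : ∀ a b c d : V, (τ a b c d : ℚ) * P.vol a b c d ≤ |(τ a b c d : ℚ)| := by
      intro a b c d
      rcases h01 a b c d with h | h | h
      · simp [h]
      · obtain ⟨d1,d2,d3,d4,d5,d6⟩ := chain3_distinct hch (by rw [h]; exact one_ne_zero)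
        have hv := hP a b c d d1 d2 d3 d4 d5 d6
        rw [h]
        push_cast
        simpa using hv
      · obtain ⟨d1,d2,d3,d4,d5,d6⟩ :=
          chain3_distinct hch (by rw [h]; exact (by norm_num : (-1 : ℤ) ≠ 0))
        have hv := hP b a c d d1.symm d4 d5 d2 d3 d6
        rw [vol_swap12 P d1 d2 d3 d4 d5 d6] at hv
        rw [h]
        push_cast
        rw [abs_neg, abs_one]
        linarith
    have hsub : S3 ⊆ F ×ˢ F ×ˢ F ×ˢ F := by
      intro t ht
      have h := (hmemS3 t).1 ht
      have hm := hmemF h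
      simp only [Finset.mem_product]
      exact ⟨hm.1, hm.2.1, hm.2.2.1, hm.2.2.2⟩
    have hXle : (∑ a ∈ F, ∑ b ∈ F, ∑ c ∈ F, ∑ d ∈ F, (τ a b c d : ℚ) * P.vol a b c d)
        ≤ (S3.card : ℚ) := by
      have step1 : (∑ a ∈ F, ∑ b ∈ F, ∑ c ∈ F, ∑ d ∈ F, (τ a b c d : ℚ) * P.vol a b c d)
          ≤ ∑ a ∈ F, ∑ b ∈ F, ∑ c ∈ F, ∑ d ∈ F, |(τ a b c d : ℚ)| := by
        refine Finset.sum_le_sum fun a _ => Finset.sum_le_sum fun b _ =>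
          Finset.sum_le_sum fun c _ => Finset.sum_le_sum fun d _ => hterm a b c d
      have step2 : (∑ a ∈ F, ∑ b ∈ F, ∑ c ∈ F, ∑ d ∈ F, |(τ a b c d : ℚ)|)
          = ∑ t ∈ F ×ˢ F ×ˢ F ×ˢ F, |(τ t.1 t.2.1 t.2.2.1 t.2.2.2 : ℚ)| := by
        rw [Finset.sum_product]
        refine Finset.sum_congr rfl fun a _ => ?_
        rw [Finset.sum_product]
        exact Finset.sum_congr rfl fun b _ => by
          exact (Finset.sum_product F F (fun y => |(τ a b y.1 y.2 : ℚ)|)).symm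
      have step3 : (∑ t ∈ F ×ˢ F ×ˢ F ×ˢ F, |(τ t.1 t.2.1 t.2.2.1 t.2.2.2 : ℚ)|)
          = ∑ t ∈ S3, |(τ t.1 t.2.1 t.2.2.1 t.2.2.2 : ℚ)| := by
        refine (Finset.sum_subset hsub fun t _ hnot => ?_).symm
        have h0 : τ t.1 t.2.1 t.2.2.1 t.2.2.2 = 0 := by
          by_contra hc
          exact hnot ((hmemS3 t).2 hc)
        simp [h0]
      have step4 : (∑ t ∈ S3, |(τ t.1 t.2.1 t.2.2.1 t.2.2.2 : ℚ)|) = (S3.card : ℚ) := by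
        rw [Finset.sum_congr rfl (fun t ht => ?_), Finset.sum_const, nsmul_eq_mul, mul_one]
        have hne := (hmemS3 t).1 ht
        rcases h01 t.1 t.2.1 t.2.2.1 t.2.2.2 with h | h | h
        · exact absurd h hne
        · rw [h]; norm_num
        · rw [h]; norm_num
      rw [step2] at step1
      exact step1.trans (le_of_eq (step3.trans step4))
    -- counting
    have himg : {s : Finset V | ∃ A B C D, τ A B C D ≠ 0 ∧ s = ({A,B,C,D} : Finset V)}
        = ↑(S3.image fun t : V × V × V × V => ({t.1, t.2.1, t.2.2.1, t.2.2.2} : Finset V)) := by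
      ext s
      simp only [Set.mem_setOf_eq, Finset.coe_image, Set.mem_image, Finset.mem_coe]
      constructor
      · rintro ⟨A, B, C, D, h, rfl⟩
        exact ⟨(A,B,C,D), (hmemS3 _).2 h, rfl⟩
      · rintro ⟨⟨A, B, C, D⟩, ht, rfl⟩
        exact ⟨A, B, C, D, (hmemS3 _).1 ht, rfl⟩
    have hcount : tetCount τ
        = (S3.image fun t : V × V × V × V => ({t.1, t.2.1, t.2.2.1, t.2.2.2} : Finset V)).card := by
      unfold tetCount
      rw [himg, Set.ncard_coe_finset]
    have hfiber : ∀ s ∈ S3.image (fun t : V × V × V × V =>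
        ({t.1, t.2.1, t.2.2.1, t.2.2.2} : Finset V)),
        (S3.filter fun t => ({t.1, t.2.1, t.2.2.1, t.2.2.2} : Finset V) = s).card ≤ 24 := by
      intro s hs
      obtain ⟨⟨A, B, C, D⟩, ht0, rfl⟩ := Finset.mem_image.1 hs
      have hsub2 : (S3.filter fun t => ({t.1, t.2.1, t.2.2.1, t.2.2.2} : Finset V)
          = ({A, B, C, D} : Finset V)) ⊆ (tuplePerms A B C D).toFinset := by
        rintro ⟨A', B', C', D'⟩ ht
        rw [Finset.mem_filter] at ht
        obtain ⟨htS, hteq⟩ := ht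
        obtain ⟨e1,e2,e3,e4,e5,e6⟩ := chain3_distinct hch ((hmemS3 _).1 htS)
        rw [List.mem_toFinset]
        exact mem_tuplePerms e1 e2 e3 e4 e5 e6 hteq
      calc (S3.filter fun t => ({t.1, t.2.1, t.2.2.1, t.2.2.2} : Finset V)
            = ({A, B, C, D} : Finset V)).card
          ≤ (tuplePerms A B C D).toFinset.card := Finset.card_le_card hsub2
        _ ≤ (tuplePerms A B C D).length := (tuplePerms A B C D).toFinset_card_le
        _ = 24 := rfl
    have hcard : S3.card ≤ 24 * (S3.image fun t : V × V × V × V =>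
        ({t.1, t.2.1, t.2.2.1, t.2.2.2} : Finset V)).card :=
      Finset.card_le_mul_card_image S3 24 hfiber
    have final : P.eval2 (bdry3 τ) ≤ (tetCount τ : ℚ) := by
      rw [hG, hcount]
      have h24 : (S3.card : ℚ) ≤ 24 * ((S3.image fun t : V × V × V × V =>
          ({t.1, t.2.1, t.2.2.1, t.2.2.2} : Finset V)).card : ℚ) := by
        exact_mod_cast hcard
      rw [hX] at hXle
      linarith
    refine Int.ceil_le.2 ?_
    exact_mod_cast final
  refine ⟨part1, ?_⟩
  rintro ⟨τ, hτ⟩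
  have hne : {n | ∃ τ' : V → V → V → V → ℤ, IsTetration σ τ' ∧ tetCount τ' = n}.Nonempty :=
    ⟨tetCount τ, τ, hτ, rfl⟩
  obtain ⟨τ', hτ', hc⟩ := Nat.sInf_mem hne
  have := part1 τ' hτ'
  rw [hc] at this
  exact this
end
end

section
/- Let σ be a combinatorial triangulation of the 2-sphere with f faces and let a be any vertex. Then the cone a⬝σ (the 3-chain Σ_F [a,F] over the faces F of σ not containing a) is a tetration of σ with exactly f − deg(a) tetrahedra. Consequently tetvol(σ) ≤ f − deg(a), and hence tetvol(σ) ≤ f − maxdeg(σ). -/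
noncomputable section

variable {V : Type*} [DecidableEq V]

/-- The faces of a 2-chain: the 3-element vertex sets of the oriented triangles
with nonzero coefficient. -/
def faceSets (σ : V → V → V → ℤ) : Set (Finset V) :=
  {s | ∃ A B C, σ A B C ≠ 0 ∧ s = ({A, B, C} : Finset V)}

/-- The edges of a 2-chain: the 2-element subsets of its faces. -/
def edgeSets (σ : V → V → V → ℤ) : Set (Finset V) :=
  {e | e.card = 2 ∧ ∃ s ∈ faceSets σ, e ⊆ s}

/-- The degree of a vertex: the number of faces containing it. -/
def deg (σ : V → V → V → ℤ) (a : V) : ℕ := {s ∈ faceSets σ | a ∈ s}.ncard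

/-- The maximum vertex degree. -/
def maxdeg (σ : V → V → V → ℤ) : ℕ := sSup {n | ∃ a : V, deg σ a = n}

/-- A *combinatorial triangulation of the 2-sphere* on a finite vertex type `V`:
a 2-chain with all nonzero coefficients `+1` (at most one oriented triangle per
3-element vertex set; in the alternating-function encoding, values in `{-1,0,1}`)
such that every vertex lies in some face, every edge lies in exactly two faces,
`∂σ = 0`, and `v − e + f = 2`. -/
def IsSphereTriangulation [Fintype V] (σ : V → V → V → ℤ) : Prop :=
  IsChain2 σ ∧
  (∀ A B C, σ A B C = 0 ∨ σ A B C = 1 ∨ σ A B C = -1) ∧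
  (∀ a : V, ∃ s ∈ faceSets σ, a ∈ s) ∧
  (∀ e ∈ edgeSets σ, {s ∈ faceSets σ | e ⊆ s}.ncard = 2) ∧
  (∀ B C : V, bdry2 σ B C = 0) ∧
  (Fintype.card V : ℤ) - ((edgeSets σ).ncard : ℤ) + ((faceSets σ).ncard : ℤ) = 2

/-- The cone `a⬝σ` of a 2-chain `σ` from a vertex `a`: the 3-chain
`Σ_F σ(F)·[a,F]`, summed over oriented triangles `F` whose vertex set does not
contain `a` (in the alternating-function encoding, tuples with repeated `a`
cancel automatically). -/
def cone (a : V) (σ : V → V → V → ℤ) : V → V → V → V → ℤ :=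
  fun X Y Z W =>
    (if X = a then σ Y Z W else 0) - (if Y = a then σ X Z W else 0)
      + (if Z = a then σ X Y W else 0) - (if W = a then σ X Y Z else 0)


namespace ConeTetAux

variable {V : Type*} [DecidableEq V]

lemma sz1 {σ : V → V → V → ℤ} (hc : IsChain2 σ) (A C : V) : σ A A C = 0 := by
  have := hc.1 A A C; omega

lemma sz2 {σ : V → V → V → ℤ} (hc : IsChain2 σ) (A B : V) : σ A B B = 0 := by
  have := hc.2.1 A B B; omega

lemma cone_swap1 {σ : V → V → V → ℤ} (hc : IsChain2 σ) (a X Y Z W : V) :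
    cone a σ Y X Z W = -cone a σ X Y Z W := by
  simp only [cone]
  rw [hc.1 Y X W, hc.1 Y X Z]
  split_ifs <;> ring

lemma cone_swap2 {σ : V → V → V → ℤ} (hc : IsChain2 σ) (a X Y Z W : V) :
    cone a σ X Z Y W = -cone a σ X Y Z W := by
  simp only [cone]
  rw [hc.1 Z Y W, hc.2.1 X Z Y]
  split_ifs <;> ring

lemma cone_swap3 {σ : V → V → V → ℤ} (hc : IsChain2 σ) (a X Y Z W : V) :
    cone a σ X Y W Z = -cone a σ X Y Z W := by
  simp only [cone]
  rw [hc.2.1 Y W Z, hc.2.1 X W Z]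
  split_ifs <;> ring

lemma crep12 {σ : V → V → V → ℤ} (hc : IsChain2 σ) (a X Z W : V) :
    cone a σ X X Z W = 0 := by
  have := cone_swap1 hc a X X Z W; omega

lemma crep23 {σ : V → V → V → ℤ} (hc : IsChain2 σ) (a X Y W : V) :
    cone a σ X Y Y W = 0 := by
  have := cone_swap2 hc a X Y Y W; omega

lemma crep34 {σ : V → V → V → ℤ} (hc : IsChain2 σ) (a X Y Z : V) :
    cone a σ X Y Z Z = 0 := by
  have := cone_swap3 hc a X Y Z Z; omega

lemma crep13 {σ : V → V → V → ℤ} (hc : IsChain2 σ) (a X Y W : V) :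
    cone a σ X Y X W = 0 := by
  have h1 := cone_swap2 hc a X X Y W
  have h2 := crep12 hc a X Y W
  omega

lemma crep24 {σ : V → V → V → ℤ} (hc : IsChain2 σ) (a X Y Z : V) :
    cone a σ X Y Z Y = 0 := by
  have h1 := cone_swap3 hc a X Y Y Z
  have h2 := crep23 hc a X Y Z
  omega

lemma crep14 {σ : V → V → V → ℤ} (hc : IsChain2 σ) (a X Y Z : V) :
    cone a σ X Y Z X = 0 := by
  have h1 := cone_swap3 hc a X Y X Z
  have h2 := crep13 hc a X Y Z
  omega

lemma cone_head {σ : V → V → V → ℤ} (a B C D : V) (hB : B ≠ a) (hC : C ≠ a) (hD : D ≠ a) :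
    cone a σ a B C D = σ B C D := by
  simp [cone, hB, hC, hD]

lemma cone_range {σ : V → V → V → ℤ} (hc : IsChain2 σ)
    (hr : ∀ A B C, σ A B C = 0 ∨ σ A B C = 1 ∨ σ A B C = -1) (a A B C D : V) :
    cone a σ A B C D = 0 ∨ cone a σ A B C D = 1 ∨ cone a σ A B C D = -1 := by
  by_cases hA : A = a
  · subst A
    by_cases hB : B = a
    · subst B; exact Or.inl (crep12 hc a a C D)
    by_cases hC : C = a
    · subst C; exact Or.inl (crep13 hc a a B D)
    by_cases hD : D = a
    · subst D; exact Or.inl (crep14 hc a a B C)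
    · rw [cone_head a B C D hB hC hD]; exact hr B C D
  · by_cases hB : B = a
    · subst B
      by_cases hC : C = a
      · subst C; exact Or.inl (crep23 hc a A a D)
      by_cases hD : D = a
      · subst D; exact Or.inl (crep24 hc a A a C)
      · rw [cone_swap1 hc a a A C D, cone_head a A C D hA hC hD]
        have := hr A C D; omega
    · by_cases hC : C = a
      · subst C
        by_cases hD : D = a
        · subst D; exact Or.inl (crep34 hc a A B a)
        · rw [cone_swap2 hc a A a B D, cone_swap1 hc a a A B D,
            cone_head a A B D hA hB hD]
          have := hr A B D; omega
      · by_cases hD : D = a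
        · subst D
          rw [cone_swap3 hc a A B a C, cone_swap2 hc a A a B C,
            cone_swap1 hc a a A B C, cone_head a A B C hA hB hC]
          have := hr A B C; omega
        · left; simp [cone, hA, hB, hC, hD]

lemma cone_ne_zero {σ : V → V → V → ℤ} (hc : IsChain2 σ) {a A B C D : V}
    (h : cone a σ A B C D ≠ 0) :
    ∃ P Q R : V, σ P Q R ≠ 0 ∧ P ≠ a ∧ Q ≠ a ∧ R ≠ a ∧
      ({A, B, C, D} : Finset V) = insert a ({P, Q, R} : Finset V) := by
  by_cases hA : A = a
  · subst A
    by_cases hB : B = a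
    · exact absurd (by rw [hB]; exact crep12 hc a a C D) h
    by_cases hC : C = a
    · exact absurd (by rw [hC]; exact crep13 hc a a B D) h
    by_cases hD : D = a
    · exact absurd (by rw [hD]; exact crep14 hc a a B C) h
    · rw [cone_head a B C D hB hC hD] at h
      exact ⟨B, C, D, h, hB, hC, hD, rfl⟩
  · by_cases hB : B = a
    · subst B
      by_cases hC : C = a
      · exact absurd (by rw [hC]; exact crep23 hc a A a D) h
      by_cases hD : D = a
      · exact absurd (by rw [hD]; exact crep24 hc a A a C) h
      · rw [cone_swap1 hc a a A C D, cone_head a A C D hA hC hD] at h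
        refine ⟨A, C, D, by simpa using h, hA, hC, hD, ?_⟩
        ext x; simp; tauto
    · by_cases hC : C = a
      · subst C
        by_cases hD : D = a
        · exact absurd (by rw [hD]; exact crep34 hc a A B a) h
        · rw [cone_swap2 hc a A a B D, cone_swap1 hc a a A B D,
            cone_head a A B D hA hB hD] at h
          refine ⟨A, B, D, by simpa using h, hA, hB, hD, ?_⟩
          ext x; simp; tauto
      · by_cases hD : D = a
        · subst D
          rw [cone_swap3 hc a A B a C, cone_swap2 hc a A a B C,
            cone_swap1 hc a a A B C, cone_head a A B C hA hB hC] at h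
          refine ⟨A, B, C, by simpa using h, hA, hB, hC, ?_⟩
          ext x; simp; tauto
        · exact absurd (by simp [cone, hA, hB, hC, hD]) h

lemma cone_bdry [Fintype V] {σ : V → V → V → ℤ} (hbd : ∀ B C, bdry2 σ B C = 0) (a : V) :
    bdry3 (cone a σ) = σ := by
  funext B C D
  have hsum : ∀ (C D : V), ∑ X : V, σ X C D = 0 := by
    intro C D
    have := hbd C D
    rwa [bdry2, finsum_eq_sum_of_fintype] at this
  simp only [bdry3, cone, finsum_eq_sum_of_fintype]
  rw [Finset.sum_sub_distrib, Finset.sum_add_distrib, Finset.sum_sub_distrib]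
  by_cases hB : B = a <;> by_cases hC : C = a <;> by_cases hD : D = a <;>
    simp [hB, hC, hD, hsum, Finset.sum_ite_eq']

end ConeTetAux

open ConeTetAux in

/-- For a combinatorial triangulation `σ` of the 2-sphere with `f`
faces and any vertex `a`, the cone `a⬝σ` is a tetration of `σ` with exactly
`f − deg(a)` tetrahedra; consequently `tetvol(σ) ≤ f − deg(a)`, and hence
`tetvol(σ) ≤ f − maxdeg(σ)`. -/
theorem cone_tetration {V : Type*} [DecidableEq V] [Fintype V]
    (σ : V → V → V → ℤ) (hσ : IsSphereTriangulation σ) (a : V) :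
    IsTetration σ (cone a σ) ∧
    tetCount (cone a σ) = (faceSets σ).ncard - deg σ a ∧
    tetvol σ ≤ (faceSets σ).ncard - deg σ a ∧
    tetvol σ ≤ (faceSets σ).ncard - maxdeg σ := by
  obtain ⟨hc, hr, hcov, hedge, hbd, heuler⟩ := hσ
  have key : ∀ b : V, IsTetration σ (cone b σ) := by
    intro b
    refine ⟨⟨fun A B C D => cone_swap1 hc b B A C D,
      fun A B C D => cone_swap2 hc b A C B D,
      fun A B C D => cone_swap3 hc b A B D C, Set.toFinite _⟩,
      fun A B C D => cone_range hc hr b A B C D, cone_bdry hbd b⟩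
  have hTC : ∀ b : V, tetCount (cone b σ) = (faceSets σ).ncard - deg σ b := by
    intro b
    have hEq : {s : Finset V | ∃ A B C D, cone b σ A B C D ≠ 0 ∧ s = ({A, B, C, D} : Finset V)}
        = (insert b) '' {F : Finset V | F ∈ faceSets σ ∧ b ∉ F} := by
      ext s
      constructor
      · rintro ⟨A, B, C, D, h, rfl⟩
        obtain ⟨P, Q, R, h0, hP, hQ, hR, hs⟩ := cone_ne_zero hc h
        refine ⟨{P, Q, R}, ⟨⟨P, Q, R, h0, rfl⟩, ?_⟩, hs.symm⟩
        simp only [Finset.mem_insert, Finset.mem_singleton, not_or]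
        exact ⟨Ne.symm hP, Ne.symm hQ, Ne.symm hR⟩
      · rintro ⟨F, ⟨⟨P, Q, R, h0, rfl⟩, hbF⟩, rfl⟩
        have hP : P ≠ b := fun h => hbF (by rw [← h]; simp)
        have hQ : Q ≠ b := fun h => hbF (by rw [← h]; simp)
        have hR : R ≠ b := fun h => hbF (by rw [← h]; simp)
        exact ⟨b, P, Q, R, by rw [cone_head b P Q R hP hQ hR]; exact h0, rfl⟩
    rw [tetCount, hEq, Set.ncard_image_of_injOn]
    · have hT : {F : Finset V | F ∈ faceSets σ ∧ b ∉ F}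
          = faceSets σ \ {F : Finset V | F ∈ faceSets σ ∧ b ∈ F} := by
        ext F
        simp only [Set.mem_setOf_eq, Set.mem_diff]
        tauto
      rw [deg, hT, Set.ncard_diff (fun F hF => hF.1) (Set.toFinite _)]
    · intro F1 h1 F2 h2 h12
      have := congrArg (fun s => Finset.erase s b) h12
      simpa [Finset.erase_insert h1.2, Finset.erase_insert h2.2] using this
  have hle : ∀ b : V, tetvol σ ≤ (faceSets σ).ncard - deg σ b := fun b =>
    Nat.sInf_le ⟨cone b σ, key b, hTC b⟩
  refine ⟨key a, hTC a, hle a, ?_⟩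
  have hVne : Nonempty V := by
    by_contra hemp
    rw [not_nonempty_iff] at hemp
    have h1 : faceSets σ = ∅ := by
      ext s
      simp only [faceSets, Set.mem_setOf_eq, Set.mem_empty_iff_false, iff_false, not_exists]
      exact fun A => (hemp.false A).elim
    have h2 : edgeSets σ = ∅ := by
      ext e
      simp [edgeSets, h1]
    rw [h1, h2] at heuler
    have hcard : Fintype.card V = 0 := Fintype.card_eq_zero
    simp [hcard] at heuler
  have hbdd : BddAbove {n | ∃ x : V, deg σ x = n} :=
    ⟨(faceSets σ).ncard, by
      rintro n ⟨x, rfl⟩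
      exact Set.ncard_le_ncard (fun s hs => hs.1) (Set.toFinite _)⟩
  have hne : {n | ∃ x : V, deg σ x = n}.Nonempty := ⟨deg σ hVne.some, hVne.some, rfl⟩
  obtain ⟨x0, hx0⟩ := Nat.sSup_mem hne hbdd
  calc tetvol σ ≤ (faceSets σ).ncard - deg σ x0 := hle x0
    _ = (faceSets σ).ncard - maxdeg σ := by rw [maxdeg, hx0]
end
end

section
/- If σ is a combinatorial triangulation of the 2-sphere with v vertices, then tetvol(σ) ≤ 2v − 4 − maxdeg(σ). -/
noncomputable section

variable {V : Type*} [DecidableEq V]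

section SphereAux
set_option linter.unusedSectionVars false
variable {V : Type*} [DecidableEq V] [Fintype V]

/-- The cone of a 2-chain from a vertex `a`. -/
def coneT (σ : V → V → V → ℤ) (a : V) : V → V → V → V → ℤ :=
  fun A B C D =>
    (if A = a then 1 else 0) * σ B C D - (if B = a then 1 else 0) * σ A C D +
    (if C = a then 1 else 0) * σ A B D - (if D = a then 1 else 0) * σ A B C

variable {σ : V → V → V → ℤ}
  (h1 : ∀ A B C, σ A B C = -σ B A C) (h2 : ∀ A B C, σ A B C = -σ A C B)

include h1 in
lemma rep1 (A C : V) : σ A A C = 0 := by have := h1 A A C; omega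

include h2 in
lemma rep2 (A B : V) : σ A B B = 0 := by have := h2 A B B; omega

include h1 h2 in
lemma rep3 (A B : V) : σ A B A = 0 := by
  have := h2 A B A; have := rep1 h1 A B; omega

include h1 h2 in
lemma cyc (A B C : V) : σ A B C = σ C A B := by
  have := h2 A B C; have := h1 A C B; omega

include h1 h2 in
lemma cone_struct (a A B C D : V) (h : coneT σ a A B C D ≠ 0) :
    ∃ B' C' D', B' ≠ a ∧ C' ≠ a ∧ D' ≠ a ∧
      coneT σ a A B C D = σ B' C' D' ∧
      ({A, B, C, D} : Finset V) = insert a {B', C', D'} := by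
  by_cases hA : A = a <;> by_cases hB : B = a <;> by_cases hC : C = a <;>
    by_cases hD : D = a
  · exfalso; apply h; subst_vars
    simp [coneT, rep1 h1, rep2 h2, rep3 h1 h2] <;> try ring
  · exfalso; apply h; subst_vars
    simp [coneT, hD, rep1 h1, rep2 h2, rep3 h1 h2] <;> try ring
  · exfalso; apply h; subst_vars
    simp [coneT, hC, rep1 h1, rep2 h2, rep3 h1 h2] <;> try ring
  · exfalso; apply h; subst_vars
    simp [coneT, hC, hD, rep1 h1, rep2 h2, rep3 h1 h2] <;> try ring
  · exfalso; apply h; subst_vars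
    simp [coneT, hB, rep1 h1, rep2 h2, rep3 h1 h2] <;> try ring
  · exfalso; apply h; subst_vars
    simp [coneT, hB, hD, rep1 h1, rep2 h2, rep3 h1 h2] <;>
      linarith [h1 B C D]
  · exfalso; apply h; subst_vars
    simp [coneT, hB, hC, rep1 h1, rep2 h2, rep3 h1 h2] <;>
      linarith [cyc h1 h2 B C D]
  · -- A = a only
    subst hA
    exact ⟨B, C, D, hB, hC, hD, by
      simp [coneT, if_neg hB, if_neg hC, if_neg hD], rfl⟩
  · exfalso; apply h; subst_vars
    simp [coneT, hA, rep1 h1, rep2 h2, rep3 h1 h2] <;> try ring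
  · exfalso; apply h; subst_vars
    simp [coneT, hA, hD, rep1 h1, rep2 h2, rep3 h1 h2] <;> try ring
  · exfalso; apply h; subst_vars
    simp [coneT, hA, hC, rep1 h1, rep2 h2, rep3 h1 h2] <;>
      linarith [h2 A C D]
  · -- B = a only
    subst hB
    refine ⟨C, A, D, hC, hA, hD, ?_, ?_⟩
    · have := h1 C A D
      simp [coneT, if_neg hA, if_neg hC, if_neg hD]; omega
    · ext x; simp [Finset.mem_insert]; tauto
  · exfalso; apply h; subst_vars
    simp [coneT, hA, hB, rep1 h1, rep2 h2, rep3 h1 h2] <;> try ring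
  · -- C = a only
    subst hC
    refine ⟨A, B, D, hA, hB, hD, ?_, ?_⟩
    · simp [coneT, if_neg hA, if_neg hB, if_neg hD]
    · ext x; simp [Finset.mem_insert]; tauto
  · -- D = a only
    subst hD
    refine ⟨B, A, C, hB, hA, hC, ?_, ?_⟩
    · have := h1 B A C
      simp [coneT, if_neg hA, if_neg hB, if_neg hC]; omega
    · ext x; simp [Finset.mem_insert]; tauto
  · exfalso; apply h
    simp [coneT, hA, hB, hC, hD]

end SphereAux
section SphereAux2
set_option linter.unusedSectionVars false
variable {V : Type*} [DecidableEq V] [Fintype V]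
variable {σ : V → V → V → ℤ}
  (h1 : ∀ A B C, σ A B C = -σ B A C) (h2 : ∀ A B C, σ A B C = -σ A C B)

include h1 h2 in
lemma cone_chain3 (a : V) : IsChain3 (coneT σ a) := by
  refine ⟨?_, ?_, ?_, Set.toFinite _⟩
  · intro A B C D; simp only [coneT]; rw [h1 B A D, h1 B A C]; ring
  · intro A B C D; simp only [coneT]; rw [h1 C B D, h2 A C B]; ring
  · intro A B C D; simp only [coneT]; rw [h2 B D C, h2 A D C]; ring

lemma cone_bdry (a : V) (hbd : ∀ B C, ∑ A : V, σ A B C = 0) (B C D : V) :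
    ∑ A : V, coneT σ a A B C D = σ B C D := by
  have key : ∀ c : ℤ, ∑ A : V, (if A = a then (1:ℤ) else 0) * c = c := by
    intro c
    simp [ite_mul, Finset.sum_ite_eq']
  simp only [coneT]
  rw [Finset.sum_sub_distrib, Finset.sum_add_distrib, Finset.sum_sub_distrib,
    key, ← Finset.mul_sum, ← Finset.mul_sum, ← Finset.mul_sum, hbd, hbd, hbd]
  ring

end SphereAux2
section SphereAux3
set_option linter.unusedSectionVars false
variable {V : Type*} [DecidableEq V] [Fintype V]
variable {σ : V → V → V → ℤ}
  (h1 : ∀ A B C, σ A B C = -σ B A C) (h2 : ∀ A B C, σ A B C = -σ A C B)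

include h1 h2 in
lemma face_card3 {s : Finset V} (hs : s ∈ faceSets σ) : s.card = 3 := by
  obtain ⟨A, B, C, hne, rfl⟩ := hs
  have hAB : A ≠ B := fun h => hne (h ▸ rep1 h1 B C)
  have hBC : B ≠ C := fun h => hne (h ▸ rep2 h2 A C)
  have hAC : A ≠ C := fun h => hne (h ▸ rep3 h1 h2 A B)
  rw [Finset.card_insert_of_notMem (by simp [hAB, hAC]),
    Finset.card_insert_of_notMem (by simp [hBC]), Finset.card_singleton]

include h1 h2 in
lemma cone_tetset (a : V) :
    {s : Finset V | ∃ A B C D, coneT σ a A B C D ≠ 0 ∧ s = ({A, B, C, D} : Finset V)}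
      = (insert a) '' {s ∈ faceSets σ | a ∉ s} := by
  ext s
  constructor
  · rintro ⟨A, B, C, D, hne, rfl⟩
    obtain ⟨B', C', D', hB', hC', hD', hval, hset⟩ := cone_struct h1 h2 a A B C D hne
    refine ⟨{B', C', D'}, ⟨⟨B', C', D', by rw [← hval]; exact hne, rfl⟩, ?_⟩, hset.symm⟩
    simp [eq_comm, Ne.symm hB', Ne.symm hC', Ne.symm hD']
  · rintro ⟨t, ⟨⟨A, B, C, hne, rfl⟩, hat⟩, rfl⟩
    have hA : A ≠ a := fun h => hat (by simp [h])
    have hB : B ≠ a := fun h => hat (by simp [h])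
    have hC : C ≠ a := fun h => hat (by simp [h])
    refine ⟨a, A, B, C, ?_, rfl⟩
    simpa [coneT, if_neg hA, if_neg hB, if_neg hC] using hne

include h1 h2 in
lemma cone_tetCount (a : V) :
    tetCount (coneT σ a) + deg σ a = (faceSets σ).ncard := by
  have hsplit : faceSets σ = {s ∈ faceSets σ | a ∉ s} ∪ {s ∈ faceSets σ | a ∈ s} := by
    ext s; by_cases h : a ∈ s <;> simp [h]
  have hdisj : Disjoint {s ∈ faceSets σ | a ∉ s} {s ∈ faceSets σ | a ∈ s} := by
    rw [Set.disjoint_left]; rintro s ⟨-, h⟩ ⟨-, h'⟩; exact h h'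
  have hinj : Set.InjOn (insert a) {s ∈ faceSets σ | a ∉ s} := by
    rintro s ⟨-, hs⟩ t ⟨-, ht⟩ h
    rw [← Finset.erase_insert hs, ← Finset.erase_insert ht, h]
  rw [tetCount, cone_tetset h1 h2 a, Set.ncard_image_of_injOn hinj]
  rw [deg]
  conv_rhs => rw [hsplit]
  rw [Set.ncard_union_eq hdisj (Set.toFinite _) (Set.toFinite _)]

end SphereAux3
section SphereAux4
set_option linter.unusedSectionVars false
variable {V : Type*} [DecidableEq V] [Fintype V]
variable {σ : V → V → V → ℤ}
  (h1 : ∀ A B C, σ A B C = -σ B A C) (h2 : ∀ A B C, σ A B C = -σ A C B)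

include h1 h2 in
lemma three_f_two_e
    (hedge2 : ∀ e ∈ edgeSets σ, {s ∈ faceSets σ | e ⊆ s}.ncard = 2) :
    3 * (faceSets σ).ncard = 2 * (edgeSets σ).ncard := by
  have hFfin : (faceSets σ).Finite := Set.toFinite _
  have hEfin : (edgeSets σ).Finite := Set.toFinite _
  set F := hFfin.toFinset with hF
  set E := hEfin.toFinset with hE
  have hFn : (faceSets σ).ncard = F.card := Set.ncard_eq_toFinset_card _ hFfin
  have hEn : (edgeSets σ).ncard = E.card := Set.ncard_eq_toFinset_card _ hEfin
  -- per-face: 3 edges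
  have hface : ∀ s ∈ F, (E.filter fun e => e ⊆ s).card = 3 := by
    intro s hs
    rw [Set.Finite.mem_toFinset] at hs
    have : (E.filter fun e => e ⊆ s) = Finset.powersetCard 2 s := by
      ext e
      simp only [Finset.mem_filter, hE, Set.Finite.mem_toFinset, Finset.mem_powersetCard]
      constructor
      · rintro ⟨⟨hc, -⟩, hsub⟩; exact ⟨hsub, hc⟩
      · rintro ⟨hsub, hc⟩; exact ⟨⟨hc, s, hs, hsub⟩, hsub⟩
    rw [this, Finset.card_powersetCard, face_card3 h1 h2 hs]
    rfl
  -- per-edge: 2 faces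
  have hedge : ∀ e ∈ E, (F.filter fun s => e ⊆ s).card = 2 := by
    intro e he
    rw [Set.Finite.mem_toFinset] at he
    have h2' := hedge2 e he
    have hfin : ({s ∈ faceSets σ | e ⊆ s}).Finite := Set.toFinite _
    rw [Set.ncard_eq_toFinset_card _ hfin] at h2'
    rw [← h2']
    congr 1
    ext s
    simp [hF, Set.Finite.mem_toFinset, faceSets]
  -- double counting
  have hdc : ∑ s ∈ F, (E.filter fun e => e ⊆ s).card
      = ∑ e ∈ E, (F.filter fun s => e ⊆ s).card := by
    simp only [Finset.card_filter]
    exact Finset.sum_comm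
  rw [Finset.sum_congr rfl hface, Finset.sum_congr rfl hedge] at hdc
  simp only [Finset.sum_const, smul_eq_mul] at hdc
  rw [hFn, hEn]; omega

end SphereAux4
/-- A combinatorial triangulation `σ` of the 2-sphere with `v`
vertices satisfies `tetvol(σ) ≤ 2v − 4 − maxdeg(σ)`. -/
theorem tetvol_le_of_maxdeg {V : Type*} [DecidableEq V] [Fintype V]
    (σ : V → V → V → ℤ) (hσ : IsSphereTriangulation σ) :
    (tetvol σ : ℤ) ≤ 2 * (Fintype.card V : ℤ) - 4 - (maxdeg σ : ℤ) := by
  obtain ⟨⟨h1, h2, -⟩, hval, hcover, hedge2, hbd, heuler⟩ := hσ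
  cases isEmpty_or_nonempty V with
  | inl hemp =>
    exfalso
    have hf0 : faceSets σ = ∅ := by
      ext s
      simp only [faceSets, Set.mem_setOf_eq, Set.mem_empty_iff_false, iff_false]
      rintro ⟨A, -⟩; exact hemp.elim A
    have he0 : edgeSets σ = ∅ := by
      ext e
      simp only [edgeSets, hf0, Set.mem_setOf_eq, Set.mem_empty_iff_false, iff_false]
      rintro ⟨-, s, hs, -⟩; exact hs
    rw [hf0, he0] at heuler
    simp [Fintype.card_eq_zero] at heuler
  | inr hne =>
    have hbdd : BddAbove {n | ∃ a : V, deg σ a = n} := by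
      have : {n | ∃ a : V, deg σ a = n} = Set.range (deg σ) := rfl
      rw [this]; exact (Set.finite_range (deg σ)).bddAbove
    have hnee : {n | ∃ a : V, deg σ a = n}.Nonempty :=
      ⟨deg σ Classical.ofNonempty, Classical.ofNonempty, rfl⟩
    obtain ⟨a, ha⟩ : ∃ a : V, deg σ a = maxdeg σ := Nat.sSup_mem hnee hbdd
    have hbd' : ∀ B C, ∑ A : V, σ A B C = 0 := by
      intro B C
      have := hbd B C
      rwa [bdry2, finsum_eq_sum_of_fintype] at this
    have hT : IsTetration σ (coneT σ a) := by
      refine ⟨cone_chain3 h1 h2 a, ?_, ?_⟩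
      · intro A B C D
        by_cases hz : coneT σ a A B C D = 0
        · exact Or.inl hz
        · obtain ⟨B', C', D', -, -, -, hv, -⟩ := cone_struct h1 h2 a A B C D hz
          rcases hval B' C' D' with h | h | h
          · exact absurd (hv.trans h) hz
          · exact Or.inr (Or.inl (hv.trans h))
          · exact Or.inr (Or.inr (hv.trans h))
      · funext B C D
        rw [bdry3, finsum_eq_sum_of_fintype]
        exact cone_bdry a hbd' B C D
    have hle : tetvol σ ≤ tetCount (coneT σ a) := Nat.sInf_le ⟨_, hT, rfl⟩
    have hcount := cone_tetCount h1 h2 a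
    rw [ha] at hcount
    have h32 := three_f_two_e h1 h2 hedge2
    have h32' : (3 : ℤ) * ((faceSets σ).ncard : ℤ) = 2 * ((edgeSets σ).ncard : ℤ) := by
      exact_mod_cast h32
    have hcount' : (tetCount (coneT σ a) : ℤ) + (maxdeg σ : ℤ) = ((faceSets σ).ncard : ℤ) := by
      exact_mod_cast hcount
    have hlv : (tetvol σ : ℤ) ≤ (tetCount (coneT σ a) : ℤ) := by exact_mod_cast hle
    linarith [heuler]
end
end

section
/- There exists a good volume potential ρ on the 12-element vertex set of the icosahedron such that ρ(𝐈) = 15, where ρ(𝐈) denotes the sum of ρ over the 20 oriented faces of the icosahedron chain 𝐈. -/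
noncomputable section

variable {V : Type*} [DecidableEq V]

/-- The alternating indicator function of the oriented triangle `[A,B,C]`:
value `+1` on the three even reorderings of `(A,B,C)`, `-1` on the three odd
ones, and `0` elsewhere. -/
def triChain (A B C X Y Z : V) : ℤ :=
  (if (X, Y, Z) = (A, B, C) ∨ (X, Y, Z) = (B, C, A) ∨ (X, Y, Z) = (C, A, B) then 1 else 0)
  - (if (X, Y, Z) = (A, C, B) ∨ (X, Y, Z) = (C, B, A) ∨ (X, Y, Z) = (B, A, C) then 1 else 0)

/-- The 20 coherently (outward) oriented faces of the regular icosahedron on the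
vertex set `Fin 12`: a combinatorial triangulation of the 2-sphere in which every
vertex has degree 5 and every edge lies in exactly two faces. -/
def icosFaces : List (Fin 12 × Fin 12 × Fin 12) :=
  [(0, 2, 1), (0, 1, 7), (0, 6, 2), (0, 5, 6), (0, 7, 5),
   (1, 2, 8), (1, 3, 7), (1, 8, 3), (2, 6, 4), (2, 4, 8),
   (3, 11, 7), (3, 8, 9), (3, 9, 11), (4, 6, 10), (4, 9, 8),
   (4, 10, 9), (5, 10, 6), (5, 7, 11), (5, 11, 10), (9, 10, 11)]

/-- The icosahedron 2-chain `𝐈`: coefficient `+1` on each of the 20 coherently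
oriented icosahedral faces. -/
def Icos : Fin 12 → Fin 12 → Fin 12 → ℤ :=
  fun X Y Z => (icosFaces.map fun f => triChain f.1 f.2.1 f.2.2 X Y Z).sum


/-- Base-17 encoding of the integer table of (twice) the potential. -/
def potN : ℕ := 8216864891324188647021895113970092733829011371267404530330310698537921808305132914301748921902560683495869147132665145738058455338308731330798626929229381151738390864854421008295697897271751310254565830797153540290972089286303582162144965219177664251112542185811117977244622246199528990528349899863828886174974000324920255289365951861934148422234900444308009044357947445029198707878219428557423531433294702465730276544028693254163130101746533440134269024625425561255333894718580140305551264535352717250807678729839056345726101497303389177638038444065888286299302534926075678500695059118237898439277111533509551518237767178767733468221567196308307681990299798681605690078681200513647873514979858727395453287385939310203588592260858227232902627078822445668144407787137818599367100854979744187569447673384463295958160870428996391229760600246916128678956050955684885948726712740879153482076492668196915218085464528707959875294501735003282183759774021618260429515002443033229406886765919763062104291557939394911361987399597043934297815997576610127831447415333809105807272727569666012077478257623428417277116320599184198374557740942815963034423234816941741635264595234070873026009326861846282829435184045587249928791991703508755072362980149629333037830209611708443608353108513732838898178648779471297897309883267712100321777102036319118836487514214464097734126408089279344494903092937792487593321436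0632511673133606605961437726480546290829933883258681697532476903501645946975762544377673995618054941774322836675158794048942070529372460358364481598243359085893864150026336715898320694191763132989207691873388077147569096345934003721149313047954069281998501239922905876166892155133080776852369368379316851580597658938871910251839223957880020342060030896286204532181144912380238967188162987357720408911595290785391721689302646862107465844387199361845466252316828427253893384800473246759545141867207676853598472808678903867399283018005502850091126688816272063024869640006275406740143558606233255817485231173599020523057996580570511511412812011915503792105731872969458913450711379393462371235779028993367203811991697363170239936078005760

/-- Twice the good volume potential, as an integer-valued alternating table. -/
def fI (a b c : Fin 12) : ℤ :=
  (potN / 17 ^ (a.val * 144 + b.val * 12 + c.val) % 17 : ℕ) - 8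

set_option maxRecDepth 100000 in
lemma fI_cyc : ∀ a b c : Fin 12, fI a b c = fI b c a := by decide
set_option maxRecDepth 100000 in
lemma fI_anti : ∀ a b c : Fin 12, fI a b c = -fI a c b := by decide
set_option maxRecDepth 100000 in
lemma fI_good : ∀ a b c d : Fin 12,
    fI b c d - fI a c d + fI a b d - fI a b c ≤ 2 := by decide
set_option maxRecDepth 100000 in
set_option maxHeartbeats 1000000 in
lemma fI_sum_0 : ∑ b : Fin 12, ∑ c : Fin 12, Icos 0 b c * fI 0 b c = (-20) := by decide

set_option maxRecDepth 100000 in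
set_option maxHeartbeats 1000000 in
lemma fI_sum_1 : ∑ b : Fin 12, ∑ c : Fin 12, Icos 1 b c * fI 1 b c = 16 := by decide

set_option maxRecDepth 100000 in
set_option maxHeartbeats 1000000 in
lemma fI_sum_2 : ∑ b : Fin 12, ∑ c : Fin 12, Icos 2 b c * fI 2 b c = 16 := by decide

set_option maxRecDepth 100000 in
set_option maxHeartbeats 1000000 in
lemma fI_sum_3 : ∑ b : Fin 12, ∑ c : Fin 12, Icos 3 b c * fI 3 b c = 20 := by decide

set_option maxRecDepth 100000 in
set_option maxHeartbeats 1000000 in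
lemma fI_sum_4 : ∑ b : Fin 12, ∑ c : Fin 12, Icos 4 b c * fI 4 b c = 20 := by decide

set_option maxRecDepth 100000 in
set_option maxHeartbeats 1000000 in
lemma fI_sum_5 : ∑ b : Fin 12, ∑ c : Fin 12, Icos 5 b c * fI 5 b c = 16 := by decide

set_option maxRecDepth 100000 in
set_option maxHeartbeats 1000000 in
lemma fI_sum_6 : ∑ b : Fin 12, ∑ c : Fin 12, Icos 6 b c * fI 6 b c = 16 := by decide

set_option maxRecDepth 100000 in
set_option maxHeartbeats 1000000 in
lemma fI_sum_7 : ∑ b : Fin 12, ∑ c : Fin 12, Icos 7 b c * fI 7 b c = 16 := by decide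

set_option maxRecDepth 100000 in
set_option maxHeartbeats 1000000 in
lemma fI_sum_8 : ∑ b : Fin 12, ∑ c : Fin 12, Icos 8 b c * fI 8 b c = 20 := by decide

set_option maxRecDepth 100000 in
set_option maxHeartbeats 1000000 in
lemma fI_sum_9 : ∑ b : Fin 12, ∑ c : Fin 12, Icos 9 b c * fI 9 b c = 20 := by decide

set_option maxRecDepth 100000 in
set_option maxHeartbeats 1000000 in
lemma fI_sum_10 : ∑ b : Fin 12, ∑ c : Fin 12, Icos 10 b c * fI 10 b c = 20 := by decide

set_option maxRecDepth 100000 in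
set_option maxHeartbeats 1000000 in
lemma fI_sum_11 : ∑ b : Fin 12, ∑ c : Fin 12, Icos 11 b c * fI 11 b c = 20 := by decide

lemma fI_sum : ∑ a : Fin 12, ∑ b : Fin 12, ∑ c : Fin 12,
    Icos a b c * fI a b c = 180 := by
  have e : ∀ a : Fin 12, (∑ b : Fin 12, ∑ c : Fin 12, Icos a b c * fI a b c)
      = ![(-20), 16, 16, 20, 20, 16, 16, 16, 20, 20, 20, 20] a := by
    intro a; fin_cases a
    exacts [fI_sum_0, fI_sum_1, fI_sum_2, fI_sum_3, fI_sum_4, fI_sum_5, fI_sum_6,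
      fI_sum_7, fI_sum_8, fI_sum_9, fI_sum_10, fI_sum_11]
  rw [Finset.sum_congr rfl fun a _ => e a]
  decide

def Pgood : VolumePotential (Fin 12) where
  ρ := fun a b c => (fI a b c : ℚ) / 2
  cyclic := fun A B C _ _ _ => by show (fI A B C : ℚ) / 2 = (fI B C A : ℚ) / 2; rw [fI_cyc A B C]
  antisymm := fun A B C _ _ _ => by
    show (fI A B C : ℚ) / 2 = -((fI A C B : ℚ) / 2); rw [fI_anti A B C]; push_cast; ring

/-- There is a good volume potential `ρ` on the 12 vertices of the
icosahedron with `ρ(𝐈) = 15`, i.e. the sum of `ρ` over the 20 oriented faces of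
the icosahedron chain `𝐈` is 15. -/
theorem icosahedron_good_potential :
    ∃ P : VolumePotential (Fin 12), P.Good ∧ P.eval2 Icos = 15 := by
  refine ⟨Pgood, ?_, ?_⟩
  · intro A B C D _ _ _ _ _ _
    have h : ((fI B C D - fI A C D + fI A B D - fI A B C : ℤ) : ℚ) ≤ 2 := by
      exact_mod_cast fI_good A B C D
    push_cast at h
    simp only [VolumePotential.vol, Pgood]
    linarith
  · have hsum : (∑ t : Fin 12 × Fin 12 × Fin 12,
        ((Icos t.1 t.2.1 t.2.2 * fI t.1 t.2.1 t.2.2 : ℤ) : ℚ)) = 180 := by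
      simp only [Fintype.sum_prod_type]
      exact_mod_cast fI_sum
    rw [VolumePotential.eval2, finsum_eq_sum_of_fintype]
    have he : ∀ t : Fin 12 × Fin 12 × Fin 12,
        (Icos t.1 t.2.1 t.2.2 : ℚ) * Pgood.ρ t.1 t.2.1 t.2.2
          = ((Icos t.1 t.2.1 t.2.2 * fI t.1 t.2.1 t.2.2 : ℤ) : ℚ) / 2 := by
      intro t; simp only [Pgood]; push_cast; ring
    rw [Finset.sum_congr rfl (fun t _ => he t), ← Finset.sum_div, hsum]
    norm_num
end
end

section
/- There exists a volume potential ρ on the vertex set ℤ that is translation-invariant (ρ(A+k, B+k, C+k) = ρ(A,B,C) for all integers k), takes values only in {−1, 0, 1}, is good, and assigns the value 1 to every face of the (5,1)-phyllocylinder: ρ([i, i+1, i+6]) = 1 and ρ([i, i+6, i+5]) = 1 for every i ∈ ℤ. -/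
noncomputable section

variable {V : Type*} [DecidableEq V]

/-! ### Construction of the potential -/

/-- The 8×8 value table. Classes `1..5` are the gaps `1..5`; classes `6,7,8`
are gaps `≥ 6` congruent to `0,1,2` mod `3` respectively. -/
def tG (u v : ℤ) : ℤ :=
  if u = 1 then (if v = 5 ∨ v = 8 then 1 else 0)
  else if u = 2 then (if v = 3 ∨ v = 6 then -1 else 0)
  else if u = 3 then -1
  else if u = 4 then (if v = 5 ∨ v = 8 then 0 else -1)
  else if u = 5 then (if v ≤ 3 ∨ v = 6 then -1 else 0)
  else if u = 6 then (if v ≤ 2 then -1 else 0)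
  else if u = 7 then (if v = 1 then -1 else if v = 5 ∨ v = 8 then 1 else 0)
  else (if v = 4 ∨ v = 5 ∨ v = 7 ∨ v = 8 then 1 else 0)

/-- Class of a positive gap. -/
def tcl (x : ℤ) : ℤ := if x ≤ 5 then x else 6 + x % 3

/-- The value on a sorted triple with gaps `p`, `q`. -/
def gg (p q : ℤ) : ℤ := tG (tcl p) (tcl q)

/-- The potential evaluated at the triple `(0, a, b)`. -/
def TT (a b : ℤ) : ℤ :=
  if 0 < a ∧ a < b then gg a (b - a)
  else if 0 < b ∧ b < a then -gg b (a - b)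
  else if a < 0 ∧ 0 < b then -gg (-a) b
  else if b < 0 ∧ 0 < a then gg (-b) a
  else if a < b ∧ b < 0 then gg (b - a) (-b)
  else if b < a ∧ a < 0 then -gg (a - b) (-a)
  else 0

set_option maxHeartbeats 1000000 in
lemma TT_cyc (a b : ℤ) (ha : a ≠ 0) (hb : b ≠ 0) (hab : a ≠ b) :
    TT a b = TT (b - a) (-a) := by
  unfold TT
  split_ifs <;>
    first
      | (exfalso; omega)
      | (congr 1 <;> omega)
      | (rw [neg_inj]; congr 1 <;> omega)

set_option maxHeartbeats 1000000 in
lemma TT_anti (a b : ℤ) (ha : a ≠ 0) (hb : b ≠ 0) (hab : a ≠ b) :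
    TT a b = -TT b a := by
  unfold TT
  split_ifs <;>
    first
      | (exfalso; omega)
      | (rw [neg_neg])
      | (congr 1 <;> omega)
      | (rw [neg_inj]; congr 1 <;> omega)
      | (rw [neg_neg]; congr 1 <;> omega)

lemma tG_mem (u v : ℤ) : tG u v = -1 ∨ tG u v = 0 ∨ tG u v = 1 := by
  unfold tG; split_ifs <;> norm_num

lemma gg_mem (p q : ℤ) : gg p q = -1 ∨ gg p q = 0 ∨ gg p q = 1 := tG_mem _ _

lemma TT_mem (a b : ℤ) : TT a b = -1 ∨ TT a b = 0 ∨ TT a b = 1 := by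
  unfold TT
  split_ifs
  · exact gg_mem _ _
  · rcases gg_mem b (a - b) with h | h | h <;> rw [h] <;> norm_num
  · rcases gg_mem (-a) b with h | h | h <;> rw [h] <;> norm_num
  · exact gg_mem _ _
  · exact gg_mem _ _
  · rcases gg_mem (a - b) (-a) with h | h | h <;> rw [h] <;> norm_num
  · norm_num

lemma tcl_bounds (x : ℤ) (h : 1 ≤ x) : 1 ≤ tcl x ∧ tcl x ≤ 8 := by
  unfold tcl; split_ifs <;> omega

lemma tcl_add (p q : ℤ) (hp : 1 ≤ p) (hq : 1 ≤ q) :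
    tcl (p + q) = if tcl p + tcl q ≤ 5 then tcl p + tcl q else 6 + (tcl p + tcl q) % 3 := by
  unfold tcl; split_ifs <;> omega

set_option maxHeartbeats 4000000 in
/-- The key finite check: the volume form of the sorted core is in `[-1, 1]`. -/
lemma core (p q r : ℤ) (hp : 1 ≤ p) (hq : 1 ≤ q) (hr : 1 ≤ r) :
    |gg q r - gg (p + q) r + gg p (q + r) - gg p q| ≤ 1 := by
  obtain ⟨h1, h2⟩ := tcl_bounds p hp
  obtain ⟨h3, h4⟩ := tcl_bounds q hq
  obtain ⟨h5, h6⟩ := tcl_bounds r hr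
  unfold gg
  rw [tcl_add p q hp hq, tcl_add q r hq hr]
  generalize tcl p = u at *
  generalize tcl q = v at *
  generalize tcl r = w at *
  interval_cases u <;> interval_cases v <;> interval_cases w <;> decide

/-- The volume potential. -/
def Pot : VolumePotential ℤ where
  ρ := fun A B C => ((TT (B - A) (C - A) : ℤ) : ℚ)
  cyclic := by
    intro A B C hAB hAC hBC
    show ((TT (B - A) (C - A) : ℤ) : ℚ) = ((TT (C - B) (A - B) : ℤ) : ℚ)
    have h : TT (B - A) (C - A) = TT (C - B) (A - B) := by
      rw [TT_cyc (B - A) (C - A) (by omega) (by omega) (by omega)]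
      congr 1 <;> ring
    exact_mod_cast congrArg (fun z : ℤ => (z : ℚ)) h
  antisymm := by
    intro A B C hAB hAC hBC
    show ((TT (B - A) (C - A) : ℤ) : ℚ) = -((TT (C - A) (B - A) : ℤ) : ℚ)
    have h : TT (B - A) (C - A) = -TT (C - A) (B - A) :=
      TT_anti (B - A) (C - A) (by omega) (by omega) (by omega)
    rw [h]
    push_cast
    ring

lemma TT_case1 (a b : ℤ) (h1 : 0 < a) (h2 : a < b) : TT a b = gg a (b - a) := by
  unfold TT
  rw [if_pos ⟨h1, h2⟩]

lemma rho_eq (X Y Z : ℤ) (h1 : X < Y) (h2 : Y < Z) :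
    Pot.ρ X Y Z = ((gg (Y - X) (Z - Y) : ℤ) : ℚ) := by
  show ((TT (Y - X) (Z - X) : ℤ) : ℚ) = _
  rw [TT_case1 (Y - X) (Z - X) (by omega) (by omega),
    show Z - X - (Y - X) = Z - Y from by ring]

lemma vol_sorted (A B C D : ℤ) (h1 : A < B) (h2 : B < C) (h3 : C < D) :
    |Pot.vol A B C D| ≤ 1 := by
  unfold VolumePotential.vol
  rw [rho_eq B C D h2 h3, rho_eq A C D (lt_trans h1 h2) h3,
    rho_eq A B D h1 (lt_trans h2 h3), rho_eq A B C h1 h2]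
  have h := core (B - A) (C - B) (D - C) (by omega) (by omega) (by omega)
  rw [show B - A + (C - B) = C - A from by ring,
    show C - B + (D - C) = D - B from by ring] at h
  exact_mod_cast h

lemma rswap23 (X Y Z : ℤ) (h1 : X ≠ Y) (h2 : X ≠ Z) (h3 : Y ≠ Z) :
    Pot.ρ X Z Y = -Pot.ρ X Y Z := by
  have := Pot.antisymm X Y Z h1 h2 h3
  linarith

lemma rswap12 (X Y Z : ℤ) (h1 : X ≠ Y) (h2 : X ≠ Z) (h3 : Y ≠ Z) :
    Pot.ρ Y X Z = -Pot.ρ X Y Z := by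
  rw [Pot.cyclic Y X Z h1.symm h3 h2]
  exact rswap23 X Y Z h1 h2 h3

lemma vswap1 (A B C D : ℤ) (hAB : A ≠ B) (hAC : A ≠ C) (hAD : A ≠ D)
    (hBC : B ≠ C) (hBD : B ≠ D) (hCD : C ≠ D) :
    |Pot.vol A B C D| = |Pot.vol B A C D| := by
  have e : Pot.vol B A C D = -Pot.vol A B C D := by
    unfold VolumePotential.vol
    rw [rswap12 A B D hAB hAD hBD, rswap12 A B C hAB hAC hBC]
    ring
  rw [e, abs_neg]

lemma vswap2 (A B C D : ℤ) (hAB : A ≠ B) (hAC : A ≠ C) (hAD : A ≠ D)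
    (hBC : B ≠ C) (hBD : B ≠ D) (hCD : C ≠ D) :
    |Pot.vol A B C D| = |Pot.vol A C B D| := by
  have e : Pot.vol A C B D = -Pot.vol A B C D := by
    unfold VolumePotential.vol
    rw [rswap12 B C D hBC hBD hCD, rswap23 A B C hAB hAC hBC]
    ring
  rw [e, abs_neg]

lemma vswap3 (A B C D : ℤ) (hAB : A ≠ B) (hAC : A ≠ C) (hAD : A ≠ D)
    (hBC : B ≠ C) (hBD : B ≠ D) (hCD : C ≠ D) :
    |Pot.vol A B C D| = |Pot.vol A B D C| := by
  have e : Pot.vol A B D C = -Pot.vol A B C D := by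
    unfold VolumePotential.vol
    rw [rswap23 B C D hBC hBD hCD, rswap23 A C D hAC hAD hCD]
    ring
  rw [e, abs_neg]

set_option maxHeartbeats 4000000 in
lemma Pot_good : Pot.Good := by
  intro A B C D hAB hAC hAD hBC hBD hCD
  have habs : |Pot.vol A B C D| ≤ 1 := by
    rcases lt_or_gt_of_ne hAB with c1 | c1 <;>
    rcases lt_or_gt_of_ne hAC with c2 | c2 <;>
    rcases lt_or_gt_of_ne hAD with c3 | c3 <;>
    rcases lt_or_gt_of_ne hBC with c4 | c4 <;>
    rcases lt_or_gt_of_ne hBD with c5 | c5 <;>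
    rcases lt_or_gt_of_ne hCD with c6 | c6
    · skip
      exact vol_sorted _ _ _ _ (by omega) (by omega) (by omega)
    · rw [vswap3 A B C D (by omega) (by omega) (by omega) (by omega) (by omega) (by omega)]
      exact vol_sorted _ _ _ _ (by omega) (by omega) (by omega)
    · exfalso; omega
    · rw [vswap3 A B C D (by omega) (by omega) (by omega) (by omega) (by omega) (by omega)]
      rw [vswap2 A B D C (by omega) (by omega) (by omega) (by omega) (by omega) (by omega)]
      exact vol_sorted _ _ _ _ (by omega) (by omega) (by omega)
    · rw [vswap2 A B C D (by omega) (by omega) (by omega) (by omega) (by omega) (by omega)]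
      exact vol_sorted _ _ _ _ (by omega) (by omega) (by omega)
    · exfalso; omega
    · rw [vswap2 A B C D (by omega) (by omega) (by omega) (by omega) (by omega) (by omega)]
      rw [vswap3 A C B D (by omega) (by omega) (by omega) (by omega) (by omega) (by omega)]
      exact vol_sorted _ _ _ _ (by omega) (by omega) (by omega)
    · rw [vswap2 A B C D (by omega) (by omega) (by omega) (by omega) (by omega) (by omega)]
      rw [vswap3 A C B D (by omega) (by omega) (by omega) (by omega) (by omega) (by omega)]
      rw [vswap2 A C D B (by omega) (by omega) (by omega) (by omega) (by omega) (by omega)]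
      exact vol_sorted _ _ _ _ (by omega) (by omega) (by omega)
    · exfalso; omega
    · exfalso; omega
    · exfalso; omega
    · rw [vswap3 A B C D (by omega) (by omega) (by omega) (by omega) (by omega) (by omega)]
      rw [vswap2 A B D C (by omega) (by omega) (by omega) (by omega) (by omega) (by omega)]
      rw [vswap1 A D B C (by omega) (by omega) (by omega) (by omega) (by omega) (by omega)]
      exact vol_sorted _ _ _ _ (by omega) (by omega) (by omega)
    · exfalso; omega
    · exfalso; omega
    · exfalso; omega
    · rw [vswap2 A B C D (by omega) (by omega) (by omega) (by omega) (by omega) (by omega)]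
      rw [vswap3 A C B D (by omega) (by omega) (by omega) (by omega) (by omega) (by omega)]
      rw [vswap2 A C D B (by omega) (by omega) (by omega) (by omega) (by omega) (by omega)]
      rw [vswap1 A D C B (by omega) (by omega) (by omega) (by omega) (by omega) (by omega)]
      exact vol_sorted _ _ _ _ (by omega) (by omega) (by omega)
    · exfalso; omega
    · exfalso; omega
    · exfalso; omega
    · exfalso; omega
    · rw [vswap2 A B C D (by omega) (by omega) (by omega) (by omega) (by omega) (by omega)]
      rw [vswap1 A C B D (by omega) (by omega) (by omega) (by omega) (by omega) (by omega)]
      exact vol_sorted _ _ _ _ (by omega) (by omega) (by omega)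
    · exfalso; omega
    · rw [vswap2 A B C D (by omega) (by omega) (by omega) (by omega) (by omega) (by omega)]
      rw [vswap3 A C B D (by omega) (by omega) (by omega) (by omega) (by omega) (by omega)]
      rw [vswap1 A C D B (by omega) (by omega) (by omega) (by omega) (by omega) (by omega)]
      exact vol_sorted _ _ _ _ (by omega) (by omega) (by omega)
    · exfalso; omega
    · exfalso; omega
    · exfalso; omega
    · exfalso; omega
    · exfalso; omega
    · exfalso; omega
    · exfalso; omega
    · rw [vswap2 A B C D (by omega) (by omega) (by omega) (by omega) (by omega) (by omega)]
      rw [vswap3 A C B D (by omega) (by omega) (by omega) (by omega) (by omega) (by omega)]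
      rw [vswap1 A C D B (by omega) (by omega) (by omega) (by omega) (by omega) (by omega)]
      rw [vswap2 C A D B (by omega) (by omega) (by omega) (by omega) (by omega) (by omega)]
      exact vol_sorted _ _ _ _ (by omega) (by omega) (by omega)
    · rw [vswap2 A B C D (by omega) (by omega) (by omega) (by omega) (by omega) (by omega)]
      rw [vswap3 A C B D (by omega) (by omega) (by omega) (by omega) (by omega) (by omega)]
      rw [vswap1 A C D B (by omega) (by omega) (by omega) (by omega) (by omega) (by omega)]
      rw [vswap2 C A D B (by omega) (by omega) (by omega) (by omega) (by omega) (by omega)]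
      rw [vswap1 C D A B (by omega) (by omega) (by omega) (by omega) (by omega) (by omega)]
      exact vol_sorted _ _ _ _ (by omega) (by omega) (by omega)
    · rw [vswap1 A B C D (by omega) (by omega) (by omega) (by omega) (by omega) (by omega)]
      exact vol_sorted _ _ _ _ (by omega) (by omega) (by omega)
    · rw [vswap1 A B C D (by omega) (by omega) (by omega) (by omega) (by omega) (by omega)]
      rw [vswap3 B A C D (by omega) (by omega) (by omega) (by omega) (by omega) (by omega)]
      exact vol_sorted _ _ _ _ (by omega) (by omega) (by omega)
    · exfalso; omega
    · exfalso; omega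
    · exfalso; omega
    · exfalso; omega
    · exfalso; omega
    · exfalso; omega
    · exfalso; omega
    · rw [vswap1 A B C D (by omega) (by omega) (by omega) (by omega) (by omega) (by omega)]
      rw [vswap3 B A C D (by omega) (by omega) (by omega) (by omega) (by omega) (by omega)]
      rw [vswap2 B A D C (by omega) (by omega) (by omega) (by omega) (by omega) (by omega)]
      exact vol_sorted _ _ _ _ (by omega) (by omega) (by omega)
    · exfalso; omega
    · rw [vswap1 A B C D (by omega) (by omega) (by omega) (by omega) (by omega) (by omega)]
      rw [vswap3 B A C D (by omega) (by omega) (by omega) (by omega) (by omega) (by omega)]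
      rw [vswap2 B A D C (by omega) (by omega) (by omega) (by omega) (by omega) (by omega)]
      rw [vswap1 B D A C (by omega) (by omega) (by omega) (by omega) (by omega) (by omega)]
      exact vol_sorted _ _ _ _ (by omega) (by omega) (by omega)
    · exfalso; omega
    · exfalso; omega
    · exfalso; omega
    · exfalso; omega
    · rw [vswap1 A B C D (by omega) (by omega) (by omega) (by omega) (by omega) (by omega)]
      rw [vswap2 B A C D (by omega) (by omega) (by omega) (by omega) (by omega) (by omega)]
      exact vol_sorted _ _ _ _ (by omega) (by omega) (by omega)
    · exfalso; omega
    · exfalso; omega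
    · exfalso; omega
    · rw [vswap1 A B C D (by omega) (by omega) (by omega) (by omega) (by omega) (by omega)]
      rw [vswap2 B A C D (by omega) (by omega) (by omega) (by omega) (by omega) (by omega)]
      rw [vswap1 B C A D (by omega) (by omega) (by omega) (by omega) (by omega) (by omega)]
      exact vol_sorted _ _ _ _ (by omega) (by omega) (by omega)
    · exfalso; omega
    · exfalso; omega
    · exfalso; omega
    · rw [vswap1 A B C D (by omega) (by omega) (by omega) (by omega) (by omega) (by omega)]
      rw [vswap2 B A C D (by omega) (by omega) (by omega) (by omega) (by omega) (by omega)]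
      rw [vswap3 B C A D (by omega) (by omega) (by omega) (by omega) (by omega) (by omega)]
      exact vol_sorted _ _ _ _ (by omega) (by omega) (by omega)
    · rw [vswap1 A B C D (by omega) (by omega) (by omega) (by omega) (by omega) (by omega)]
      rw [vswap2 B A C D (by omega) (by omega) (by omega) (by omega) (by omega) (by omega)]
      rw [vswap3 B C A D (by omega) (by omega) (by omega) (by omega) (by omega) (by omega)]
      rw [vswap2 B C D A (by omega) (by omega) (by omega) (by omega) (by omega) (by omega)]
      exact vol_sorted _ _ _ _ (by omega) (by omega) (by omega)
    · exfalso; omega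
    · rw [vswap1 A B C D (by omega) (by omega) (by omega) (by omega) (by omega) (by omega)]
      rw [vswap2 B A C D (by omega) (by omega) (by omega) (by omega) (by omega) (by omega)]
      rw [vswap3 B C A D (by omega) (by omega) (by omega) (by omega) (by omega) (by omega)]
      rw [vswap2 B C D A (by omega) (by omega) (by omega) (by omega) (by omega) (by omega)]
      rw [vswap1 B D C A (by omega) (by omega) (by omega) (by omega) (by omega) (by omega)]
      exact vol_sorted _ _ _ _ (by omega) (by omega) (by omega)
    · rw [vswap1 A B C D (by omega) (by omega) (by omega) (by omega) (by omega) (by omega)]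
      rw [vswap2 B A C D (by omega) (by omega) (by omega) (by omega) (by omega) (by omega)]
      rw [vswap3 B C A D (by omega) (by omega) (by omega) (by omega) (by omega) (by omega)]
      rw [vswap1 B C D A (by omega) (by omega) (by omega) (by omega) (by omega) (by omega)]
      exact vol_sorted _ _ _ _ (by omega) (by omega) (by omega)
    · exfalso; omega
    · rw [vswap1 A B C D (by omega) (by omega) (by omega) (by omega) (by omega) (by omega)]
      rw [vswap2 B A C D (by omega) (by omega) (by omega) (by omega) (by omega) (by omega)]
      rw [vswap3 B C A D (by omega) (by omega) (by omega) (by omega) (by omega) (by omega)]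
      rw [vswap1 B C D A (by omega) (by omega) (by omega) (by omega) (by omega) (by omega)]
      rw [vswap2 C B D A (by omega) (by omega) (by omega) (by omega) (by omega) (by omega)]
      exact vol_sorted _ _ _ _ (by omega) (by omega) (by omega)
    · rw [vswap1 A B C D (by omega) (by omega) (by omega) (by omega) (by omega) (by omega)]
      rw [vswap2 B A C D (by omega) (by omega) (by omega) (by omega) (by omega) (by omega)]
      rw [vswap3 B C A D (by omega) (by omega) (by omega) (by omega) (by omega) (by omega)]
      rw [vswap1 B C D A (by omega) (by omega) (by omega) (by omega) (by omega) (by omega)]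
      rw [vswap2 C B D A (by omega) (by omega) (by omega) (by omega) (by omega) (by omega)]
      rw [vswap1 C D B A (by omega) (by omega) (by omega) (by omega) (by omega) (by omega)]
      exact vol_sorted _ _ _ _ (by omega) (by omega) (by omega)
  exact le_trans (le_abs_self _) habs


/-- There is a volume potential `ρ` on the vertex set `ℤ` that is
translation-invariant, takes only the values `−1, 0, 1`, is good, and assigns
the value `1` to every face `[i, i+1, i+6]` and `[i, i+6, i+5]` of the
(5,1)-phyllocylinder. -/
theorem phyllocylinder_potential :
    ∃ P : VolumePotential ℤ,
      (∀ A B C k : ℤ, A ≠ B → A ≠ C → B ≠ C →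
        P.ρ (A + k) (B + k) (C + k) = P.ρ A B C) ∧
      (∀ A B C : ℤ, A ≠ B → A ≠ C → B ≠ C →
        P.ρ A B C = -1 ∨ P.ρ A B C = 0 ∨ P.ρ A B C = 1) ∧
      P.Good ∧
      (∀ i : ℤ, P.ρ i (i + 1) (i + 6) = 1 ∧ P.ρ i (i + 6) (i + 5) = 1) := by
  
  refine ⟨Pot, ?_, ?_, Pot_good, ?_⟩
  · intro A B C k _ _ _
    show ((TT (B + k - (A + k)) (C + k - (A + k)) : ℤ) : ℚ) = ((TT (B - A) (C - A) : ℤ) : ℚ)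
    rw [show B + k - (A + k) = B - A from by ring, show C + k - (A + k) = C - A from by ring]
  · intro A B C _ _ _
    show ((TT (B - A) (C - A) : ℤ) : ℚ) = -1 ∨
      ((TT (B - A) (C - A) : ℤ) : ℚ) = 0 ∨ ((TT (B - A) (C - A) : ℤ) : ℚ) = 1
    rcases TT_mem (B - A) (C - A) with h | h | h <;> rw [h] <;> norm_num
  · intro i
    constructor
    · show ((TT (i + 1 - i) (i + 6 - i) : ℤ) : ℚ) = 1
      rw [show i + 1 - i = (1 : ℤ) from by ring, show i + 6 - i = (6 : ℤ) from by ring]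
      norm_num [TT, gg, tcl, tG]
    · show ((TT (i + 6 - i) (i + 5 - i) : ℤ) : ℚ) = 1
      rw [show i + 6 - i = (6 : ℤ) from by ring, show i + 5 - i = (5 : ℤ) from by ring]
      norm_num [TT, gg, tcl, tG]
end
end

section
/- Let σ be a combinatorial triangulation of the 2-sphere with f faces and let τ be a tetration of σ with |τ| < f. Then some tetrahedron of τ has at least two of the four 3-element subsets of its vertex set occurring as vertex sets of faces of σ. -/
noncomputable section

variable {V : Type*} [DecidableEq V]

lemma chain2_distinct {σ : V → V → V → ℤ} (h : IsChain2 σ) {A B C : V}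
    (hne : σ A B C ≠ 0) : A ≠ B ∧ A ≠ C ∧ B ≠ C := by
  obtain ⟨h1, h2, -⟩ := h
  have h13 : ∀ X Y Z : V, σ X Y Z = -σ Z Y X := fun X Y Z => by
    rw [h1 X Y Z, h2 Y X Z, h1 Y Z X]; ring
  refine ⟨?_, ?_, ?_⟩ <;> rintro rfl
  · have := h1 A A C; omega
  · have := h13 A B A; omega
  · have := h2 A B B; omega

lemma card_three {a b c : V} (hab : a ≠ b) (hac : a ≠ c) (hbc : b ≠ c) :
    ({a, b, c} : Finset V).card = 3 := by
  rw [Finset.card_insert_of_notMem (by simp [hab, hac]),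
    Finset.card_insert_of_notMem (by simp [hbc]), Finset.card_singleton]

lemma subset_mem_four {x a b c : V} (hxa : x ≠ a) (hxb : x ≠ b) (hxc : x ≠ c)
    (hab : a ≠ b) (hac : a ≠ c) (hbc : b ≠ c) {s : Finset V}
    (hs : s ⊆ {x, a, b, c}) (hcard : s.card = 3) :
    s = {a, b, c} ∨ s = {x, b, c} ∨ s = {x, a, c} ∨ s = {x, a, b} := by
  by_cases hx : x ∈ s
  · by_cases ha : a ∈ s
    · by_cases hb : b ∈ s
      · by_cases hc : c ∈ s
        · exfalso
          have hsub : ({x, a, b, c} : Finset V) ⊆ s := by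
            intro z hz
            simp only [Finset.mem_insert, Finset.mem_singleton] at hz
            rcases hz with rfl | rfl | rfl | rfl <;> assumption
          have h4 : ({x, a, b, c} : Finset V).card = 4 := by
            rw [Finset.card_insert_of_notMem (by simp [hxa, hxb, hxc]),
              card_three hab hac hbc]
          have := Finset.card_le_card hsub
          omega
        · -- c ∉ s : s = {x, a, b}
          right; right; right
          refine Finset.eq_of_subset_of_card_le ?_ ?_
          · intro z hz
            have hz' := hs hz
            simp only [Finset.mem_insert, Finset.mem_singleton] at hz' ⊢
            rcases hz' with rfl | rfl | rfl | rfl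
            · exact Or.inl rfl
            · exact Or.inr (Or.inl rfl)
            · exact Or.inr (Or.inr rfl)
            · exact absurd hz hc
          · rw [card_three hxa hxb hab, hcard]
      · -- b ∉ s : s = {x, a, c}
        right; right; left
        refine Finset.eq_of_subset_of_card_le ?_ ?_
        · intro z hz
          have hz' := hs hz
          simp only [Finset.mem_insert, Finset.mem_singleton] at hz' ⊢
          rcases hz' with rfl | rfl | rfl | rfl
          · exact Or.inl rfl
          · exact Or.inr (Or.inl rfl)
          · exact absurd hz hb
          · exact Or.inr (Or.inr rfl)
        · rw [card_three hxa hxc hac, hcard]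
    · -- a ∉ s : s = {x, b, c}
      right; left
      refine Finset.eq_of_subset_of_card_le ?_ ?_
      · intro z hz
        have hz' := hs hz
        simp only [Finset.mem_insert, Finset.mem_singleton] at hz' ⊢
        rcases hz' with rfl | rfl | rfl | rfl
        · exact Or.inl rfl
        · exact absurd hz ha
        · exact Or.inr (Or.inl rfl)
        · exact Or.inr (Or.inr rfl)
      · rw [card_three hxb hxc hbc, hcard]
  · -- x ∉ s : s = {a, b, c}
    left
    refine Finset.eq_of_subset_of_card_le ?_ ?_
    · intro z hz
      have hz' := hs hz
      simp only [Finset.mem_insert, Finset.mem_singleton] at hz' ⊢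
      rcases hz' with rfl | rfl | rfl | rfl
      · exact absurd hz hx
      · exact Or.inl rfl
      · exact Or.inr (Or.inl rfl)
      · exact Or.inr (Or.inr rfl)
    · rw [card_three hab hac hbc, hcard]

/-- If `σ` is a combinatorial triangulation of the 2-sphere with
`f` faces and `τ` is a tetration of `σ` with `|τ| < f`, then some tetrahedron of
`τ` has at least two of the four 3-element subsets of its vertex set occurring
as vertex sets of faces of `σ`. -/
theorem tetration_has_double_face {V : Type*} [DecidableEq V] [Fintype V]
    (σ : V → V → V → ℤ) (hσ : IsSphereTriangulation σ)
    (τ : V → V → V → V → ℤ) (hτ : IsTetration σ τ)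
    (hlt : tetCount τ < (faceSets σ).ncard) :
    ∃ A B C D : V, τ A B C D ≠ 0 ∧
      2 ≤ ((({({A, B, C} : Finset V), {A, B, D}, {A, C, D}, {B, C, D}} : Set (Finset V))
              ∩ faceSets σ).ncard) := by
  by_contra hcon
  push_neg at hcon
  obtain ⟨hch3, hcoef, hbd⟩ := hτ
  -- every face is contained in the vertex set of some tetrahedron of τ
  have hex : ∀ s ∈ faceSets σ,
      ∃ t ∈ {u : Finset V | ∃ A B C D, τ A B C D ≠ 0 ∧ u = ({A, B, C, D} : Finset V)},
        s ⊆ t := by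
    rintro s ⟨A, B, C, hA, rfl⟩
    have hsum : (∑ᶠ X, τ X A B C) ≠ 0 := by
      have h' : bdry3 τ A B C = σ A B C := by rw [hbd]
      rw [bdry3] at h'
      rw [h']; exact hA
    have hX : ∃ X, τ X A B C ≠ 0 := by
      by_contra hall
      push_neg at hall
      exact hsum (by simp [hall])
    obtain ⟨X, hX⟩ := hX
    refine ⟨{X, A, B, C}, ⟨X, A, B, C, hX, rfl⟩, ?_⟩
    intro z hz
    simp only [Finset.mem_insert, Finset.mem_singleton] at hz ⊢
    tauto
  choose g hgT hgsub using hex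
  classical
  set f : Finset V → Finset V :=
    fun s => if h : s ∈ faceSets σ then g s h else ∅ with hf
  have hfaces3 : ∀ s ∈ faceSets σ, s.card = 3 := by
    rintro s ⟨A, B, C, hA, rfl⟩
    obtain ⟨h1, h2, h3⟩ := chain2_distinct hσ.1 hA
    exact card_three h1 h2 h3
  have hmaps : ∀ s ∈ faceSets σ,
      f s ∈ {u : Finset V | ∃ A B C D, τ A B C D ≠ 0 ∧ u = ({A, B, C, D} : Finset V)} := by
    intro s hs
    rw [hf]; simp only [dif_pos hs]; exact hgT s hs
  have hinj : Set.InjOn f (faceSets σ) := by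
    intro s1 hs1 s2 hs2 heq
    by_contra hne
    obtain ⟨A, B, C, D, hABCD, htet⟩ := hmaps s1 hs1
    obtain ⟨d1, d2, d3, d4, d5, d6⟩ := chain3_distinct hch3 hABCD
    have hsub1 : s1 ⊆ ({A, B, C, D} : Finset V) := by
      rw [← htet, hf]; simp only [dif_pos hs1]; exact hgsub s1 hs1
    have hsub2 : s2 ⊆ ({A, B, C, D} : Finset V) := by
      rw [← htet, heq, hf]; simp only [dif_pos hs2]; exact hgsub s2 hs2
    have hmem : ∀ s ∈ faceSets σ, s ⊆ ({A, B, C, D} : Finset V) →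
        s ∈ ({({A, B, C} : Finset V), {A, B, D}, {A, C, D}, {B, C, D}} : Set (Finset V)) := by
      intro s hs hsub
      rcases subset_mem_four d1 d2 d3 d4 d5 d6 hsub (hfaces3 s hs) with h | h | h | h <;>
        simp [h]
    have hpair : ({s1, s2} : Set (Finset V)) ⊆
        (({({A, B, C} : Finset V), {A, B, D}, {A, C, D}, {B, C, D}} : Set (Finset V))
          ∩ faceSets σ) := by
      intro z hz
      rcases hz with rfl | hz
      · exact ⟨hmem z hs1 hsub1, hs1⟩
      · rcases hz with rfl
        exact ⟨hmem z hs2 hsub2, hs2⟩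
    have h2le : 2 ≤ (({({A, B, C} : Finset V), {A, B, D}, {A, C, D}, {B, C, D}} : Set (Finset V))
          ∩ faceSets σ).ncard := by
      have := Set.ncard_le_ncard hpair (Set.toFinite _)
      rwa [Set.ncard_pair hne] at this
    exact absurd h2le (not_le.mpr (hcon A B C D hABCD))
  have hle : (faceSets σ).ncard ≤ tetCount τ := by
    have := Set.ncard_le_ncard_of_injOn f hmaps hinj (Set.toFinite _)
    exact this
  omega
end
end

section
/- Flip paths beget tetrations: let T_0, T_1, …, T_n be triangulations of the convex v-gon such that each T_{k+1} is obtained from T_k by a flip, the k-th flip replacing triangles {a_k,b_k,c_k} and {a_k,c_k,d_k} (with a_k < b_k < c_k < d_k) by {a_k,b_k,d_k} and {b_k,c_k,d_k}. Then the 3-chain τ := Σ_{k=0}^{n−1} (−[a_k, b_k, c_k, d_k]) satisfies ∂τ = σ_{T_0} − σ_{T_n} and ‖τ‖₁ ≤ n. Consequently, for every good volume potential ρ on {0,…,v−1}, n ≥ ρ(σ_{T_0}) − ρ(σ_{T_n}). -/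
noncomputable section

variable {V : Type*} [DecidableEq V]

/-! Convex polygon combinatorics: the vertices of a convex `v`-gon are labelled
`0, 1, …, v−1` (here `Fin v`) in counterclockwise cyclic order. -/

/-- `e` is a side of the convex `v`-gon: `{i, i+1}` or `{0, v−1}`. -/
def IsSide (v : ℕ) (e : Finset (Fin v)) : Prop :=
  ∃ i j : Fin v, e = {i, j} ∧
    ((j : ℕ) = (i : ℕ) + 1 ∨ ((i : ℕ) = 0 ∧ (j : ℕ) = v - 1))

/-- `e` is a diagonal of the convex `v`-gon: a 2-element vertex set that is not
a side. -/
def IsDiag (v : ℕ) (e : Finset (Fin v)) : Prop :=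
  e.card = 2 ∧ ¬ IsSide v e

/-- Two diagonals `{a,c}` and `{b,d}` cross when `a < b < c < d`. -/
def Crossing {v : ℕ} (e f : Finset (Fin v)) : Prop :=
  ∃ a b c d : Fin v, a < b ∧ b < c ∧ c < d ∧
    ((e = {a, c} ∧ f = {b, d}) ∨ (e = {b, d} ∧ f = {a, c}))

/-- `D` is a maximal set of pairwise non-crossing diagonals of the `v`-gon. -/
def IsMaxNoncrossing (v : ℕ) (D : Finset (Finset (Fin v))) : Prop :=
  (∀ e ∈ D, IsDiag v e) ∧ (∀ e ∈ D, ∀ f ∈ D, ¬ Crossing e f) ∧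
  (∀ e, IsDiag v e → e ∉ D → ∃ f ∈ D, Crossing e f)

/-- An edge of the subdivided polygon: a side or a chosen diagonal. -/
def IsPolyEdge (v : ℕ) (D : Finset (Finset (Fin v))) (e : Finset (Fin v)) : Prop :=
  e ∈ D ∨ IsSide v e

/-- A *triangulation of the convex `v`-gon*: a set of `v − 2` triangles
(3-element vertex subsets) that tile the polygon, i.e. the set of triangles cut
out by a maximal set `D` of pairwise non-crossing diagonals (for vertices in
convex position these are exactly the triangles all three of whose edges are
sides or diagonals of `D`). -/
def IsPolygonTriangulation (v : ℕ) (T : Finset (Finset (Fin v))) : Prop :=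
  T.card = v - 2 ∧
  ∃ D : Finset (Finset (Fin v)), IsMaxNoncrossing v D ∧
    ∀ t, t ∈ T ↔ ∃ x y z : Fin v, x < y ∧ y < z ∧ t = {x, y, z} ∧
      IsPolyEdge v D {x, y} ∧ IsPolyEdge v D {y, z} ∧ IsPolyEdge v D {x, z}

/-- The alternating indicator of the counterclockwise orientation of the
triangle with vertex set `t`: the triangle `a < b < c` is oriented as `[a,b,c]`,
so an ordered triple `(X,Y,Z)` of distinct vertices with `{X,Y,Z} = t` gets the
sign of the permutation sorting it. -/
def sortedTriChain {v : ℕ} (t : Finset (Fin v)) (X Y Z : Fin v) : ℤ :=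
  if ({X, Y, Z} : Finset (Fin v)) = t ∧ X ≠ Y ∧ X ≠ Z ∧ Y ≠ Z then
    (if X < Y then 1 else -1) * (if X < Z then 1 else -1) * (if Y < Z then 1 else -1)
  else 0

/-- The 2-chain `σ_T` of a polygon triangulation `T`: coefficient `+1` on each
triangle of `T`, oriented counterclockwise. -/
def polyChain {v : ℕ} (T : Finset (Finset (Fin v))) : Fin v → Fin v → Fin v → ℤ :=
  fun X Y Z => ∑ t ∈ T, sortedTriChain t X Y Z

/-- The alternating indicator of the oriented tetrahedron `[a,b,c,d]` where
`a < b < c < d`: an ordered 4-tuple of distinct vertices with vertex set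
`{a,b,c,d}` gets the sign of the permutation sorting it. -/
def sortedTetChain {v : ℕ} (a b c d X Y Z W : Fin v) : ℤ :=
  if ({X, Y, Z, W} : Finset (Fin v)) = ({a, b, c, d} : Finset (Fin v)) ∧
      X ≠ Y ∧ X ≠ Z ∧ X ≠ W ∧ Y ≠ Z ∧ Y ≠ W ∧ Z ≠ W then
    (if X < Y then 1 else -1) * (if X < Z then 1 else -1) * (if X < W then 1 else -1) *
    (if Y < Z then 1 else -1) * (if Y < W then 1 else -1) * (if Z < W then 1 else -1)
  else 0

/-!
A flip inside the quadrilateral `a < b < c < d` trades the triangles `abc, acd` for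
`abd, bcd`, and `abc + acd - abd - bcd` is exactly the boundary of `-[a, b, c, d]`; summing
over the flips telescopes to `∂τ = σ_{T_0} - σ_{T_n}`, and each tetrahedron has ℓ¹-norm one.
For the consequence, `ρ(∂τ) = vol_ρ(τ)` for every 3-chain `τ`, and a good `ρ` has
`|vol_ρ| ≤ 1` on distinct vertices because swapping two vertices negates `vol_ρ`; hence
`ρ(σ_{T_0}) - ρ(σ_{T_n}) = vol_ρ(τ) ≤ ‖τ‖₁ ≤ n`.
-/

section Chains

variable {α : Type*}

theorem IsChain3.pairwise_ne_of_ne_zero_s18 {c : α → α → α → α → ℤ} (hc : IsChain3 c)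
    {A B C D : α} (h : c A B C D ≠ 0) :
    A ≠ B ∧ A ≠ C ∧ A ≠ D ∧ B ≠ C ∧ B ≠ D ∧ C ≠ D := by
  obtain ⟨h01, h12, h23, -⟩ := hc
  refine ⟨?_, ?_, ?_, ?_, ?_, ?_⟩ <;> rintro rfl <;> grind

theorem VolumePotential.ρ_swap (P : VolumePotential α) {A B C : α}
    (hAB : A ≠ B) (hAC : A ≠ C) (hBC : B ≠ C) : P.ρ B A C = -P.ρ A B C := by
  rw [P.cyclic B A C hAB.symm hBC hAC, P.antisymm A B C hAB hAC hBC, neg_neg]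

theorem VolumePotential.vol_swap (P : VolumePotential α) {A B C D : α}
    (hAB : A ≠ B) (hAC : A ≠ C) (hAD : A ≠ D) (hBC : B ≠ C) (hBD : B ≠ D) :
    P.vol B A C D = -P.vol A B C D := by
  simp only [VolumePotential.vol, P.ρ_swap hAB hAD hBD, P.ρ_swap hAB hAC hBC]
  ring

theorem VolumePotential.Good.abs_vol_le_one_s18 {P : VolumePotential α} (hP : P.Good)
    {A B C D : α} (hAB : A ≠ B) (hAC : A ≠ C) (hAD : A ≠ D) (hBC : B ≠ C) (hBD : B ≠ D)
    (hCD : C ≠ D) : |P.vol A B C D| ≤ 1 := by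
  have hneg := hP B A C D hAB.symm hBC hBD hAC hAD hCD
  rw [P.vol_swap hAB hAC hAD hBC hBD] at hneg
  exact abs_le.2 ⟨by linarith, hP A B C D hAB hAC hAD hBC hBD hCD⟩

variable [Fintype α]

theorem VolumePotential.eval2_sub (P : VolumePotential α) (c c' : α → α → α → ℤ) :
    P.eval2 (fun X Y Z => c X Y Z - c' X Y Z) = P.eval2 c - P.eval2 c' := by
  simp only [VolumePotential.eval2, finsum_eq_sum_of_fintype, Int.cast_sub, sub_mul,
    Finset.sum_sub_distrib, sub_div]

theorem VolumePotential.eval3_le_l1norm3 {P : VolumePotential α} (hP : P.Good)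
    {c : α → α → α → α → ℤ} (hc : IsChain3 c) : P.eval3 c ≤ l1norm3 c := by
  rw [VolumePotential.eval3, l1norm3, finsum_eq_sum_of_fintype, finsum_eq_sum_of_fintype]
  gcongr with t
  obtain ⟨A, B, C, D⟩ := t
  by_cases h : c A B C D = 0
  · simp [h]
  obtain ⟨hAB, hAC, hAD, hBC, hBD, hCD⟩ := hc.pairwise_ne_of_ne_zero_s18 h
  calc (c A B C D : ℚ) * P.vol A B C D ≤ |(c A B C D : ℚ)| * |P.vol A B C D| := by
        rw [← abs_mul]; exact le_abs_self _
    _ ≤ |(c A B C D : ℚ)| * 1 := by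
        gcongr; exact hP.abs_vol_le_one_s18 hAB hAC hAD hBC hBD hCD
    _ = |(c A B C D : ℚ)| := mul_one _

/-- Reindexing the tetrahedra so that a face of `vol` becomes the last three vertices shows
that each of the four faces contributes the same sum `S`, up to the sign in `vol`. -/
theorem VolumePotential.eval3_eq_eval2_bdry3 (P : VolumePotential α)
    {c : α → α → α → α → ℤ} (hc : IsChain3 c) : P.eval3 c = P.eval2 (bdry3 c) := by
  obtain ⟨h01, h12, h23, -⟩ := hc
  set S := ∑ t : α × α × α × α,
    (c t.1 t.2.1 t.2.2.1 t.2.2.2 : ℚ) * P.ρ t.2.1 t.2.2.1 t.2.2.2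
  have face₀ : ∑ t : α × α × α × α,
      (c t.1 t.2.1 t.2.2.1 t.2.2.2 : ℚ) * P.ρ t.1 t.2.2.1 t.2.2.2 = -S := by
    rw [← Finset.sum_neg_distrib]
    refine Fintype.sum_equiv ⟨fun t => (t.2.1, t.1, t.2.2), fun t => (t.2.1, t.1, t.2.2),
      fun _ => rfl, fun _ => rfl⟩ _ _ fun ⟨A, B, C, D⟩ => ?_
    simp only [Equiv.coe_fn_mk, h01 A B C D, Int.cast_neg, neg_mul]
  have face₂ : ∑ t : α × α × α × α,
      (c t.1 t.2.1 t.2.2.1 t.2.2.2 : ℚ) * P.ρ t.1 t.2.1 t.2.2.2 = S := by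
    refine Fintype.sum_equiv ⟨fun t => (t.2.2.1, t.1, t.2.1, t.2.2.2),
      fun t => (t.2.1, t.2.2.1, t.1, t.2.2.2), fun _ => rfl, fun _ => rfl⟩ _ _
      fun ⟨A, B, C, D⟩ => ?_
    simp only [Equiv.coe_fn_mk, h01 C A B D, h12 A C B D, neg_neg]
  have face₃ : ∑ t : α × α × α × α,
      (c t.1 t.2.1 t.2.2.1 t.2.2.2 : ℚ) * P.ρ t.1 t.2.1 t.2.2.1 = -S := by
    rw [← Finset.sum_neg_distrib]
    refine Fintype.sum_equiv ⟨fun t => (t.2.2.2, t.1, t.2.1, t.2.2.1),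
      fun t => (t.2.1, t.2.2.1, t.2.2.2, t.1), fun _ => rfl, fun _ => rfl⟩ _ _
      fun ⟨A, B, C, D⟩ => ?_
    simp only [Equiv.coe_fn_mk, h01 D A B C, h12 A D B C, h23 A B D C, neg_neg, Int.cast_neg,
      neg_mul]
  have hbdry : ∑ t : α × α × α,
      ((∑ A, c A t.1 t.2.1 t.2.2 : ℤ) : ℚ) * P.ρ t.1 t.2.1 t.2.2 = S := by
    simp only [Int.cast_sum, Finset.sum_mul]
    rw [Finset.sum_comm, ← Fintype.sum_prod_type']
  simp only [VolumePotential.eval3, VolumePotential.eval2, VolumePotential.vol, bdry3,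
    finsum_eq_sum_of_fintype, mul_sub, mul_add, Finset.sum_sub_distrib, Finset.sum_add_distrib,
    face₀, face₂, face₃]
  rw [hbdry]
  ring

end Chains

section Order

variable {β : Type*} [LinearOrder β] {x y : β}

def ltSign (x y : β) : ℤ := if x < y then 1 else -1

theorem ltSign_of_lt (h : x < y) : ltSign x y = 1 := if_pos h

theorem ltSign_of_gt (h : y < x) : ltSign x y = -1 := if_neg h.not_gt

theorem ltSign_swap (h : x ≠ y) : ltSign y x = -ltSign x y := by
  rcases h.lt_or_gt with h | h
  · rw [ltSign_of_lt h, ltSign_of_gt h]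
  · rw [ltSign_of_lt h, ltSign_of_gt h, neg_neg]

theorem eq_of_sorted_triple_eq {z p q r : β} (h : ({x, y, z} : Finset β) = {p, q, r})
    (hxy : x < y) (hyz : y < z) (hpq : p < q) (hqr : q < r) : x = p ∧ y = q ∧ z = r := by
  have mem : ∀ w, w = x ∨ w = y ∨ w = z ↔ w = p ∨ w = q ∨ w = r := by
    simpa [Finset.ext_iff] using h
  have := mem x; have := mem y; have := mem z; have := mem p; have := mem q; have := mem r
  grind

end Order

section Polygon

variable {v : ℕ}

theorem sortedTriChain_eq_ite (t : Finset (Fin v)) (X Y Z : Fin v) :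
    sortedTriChain t X Y Z =
      if ({X, Y, Z} : Finset (Fin v)) = t ∧ X ≠ Y ∧ X ≠ Z ∧ Y ≠ Z then
        ltSign X Y * ltSign X Z * ltSign Y Z
      else 0 := rfl

theorem sortedTetChain_eq_ite (a b c d X Y Z W : Fin v) :
    sortedTetChain a b c d X Y Z W =
      if ({X, Y, Z, W} : Finset (Fin v)) = {a, b, c, d} ∧
          X ≠ Y ∧ X ≠ Z ∧ X ≠ W ∧ Y ≠ Z ∧ Y ≠ W ∧ Z ≠ W then
        ltSign X Y * ltSign X Z * ltSign X W * ltSign Y Z * ltSign Y W * ltSign Z W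
      else 0 := rfl

theorem sortedTetChain_swap₀₁ (a b c d X Y Z W : Fin v) :
    sortedTetChain a b c d X Y Z W = -sortedTetChain a b c d Y X Z W := by
  rw [sortedTetChain_eq_ite, sortedTetChain_eq_ite, Finset.insert_comm Y X]
  by_cases hXY : X = Y
  · simp [hXY]
  rw [ltSign_swap hXY]
  simp only [ne_comm (a := Y) (b := X)]
  split_ifs <;> first | ring1 | grind

theorem sortedTetChain_swap₁₂ (a b c d X Y Z W : Fin v) :
    sortedTetChain a b c d X Y Z W = -sortedTetChain a b c d X Z Y W := by
  rw [sortedTetChain_eq_ite, sortedTetChain_eq_ite, Finset.insert_comm Z Y]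
  by_cases hYZ : Y = Z
  · simp [hYZ]
  rw [ltSign_swap hYZ]
  simp only [ne_comm (a := Z) (b := Y)]
  split_ifs <;> first | ring1 | grind

theorem sortedTetChain_swap₂₃ (a b c d X Y Z W : Fin v) :
    sortedTetChain a b c d X Y Z W = -sortedTetChain a b c d X Y W Z := by
  rw [sortedTetChain_eq_ite, sortedTetChain_eq_ite, Finset.pair_comm W Z]
  by_cases hZW : Z = W
  · simp [hZW]
  rw [ltSign_swap hZW]
  simp only [ne_comm (a := W) (b := Z)]
  split_ifs <;> first | ring1 | grind

theorem isChain3_sum_neg_sortedTetChain {ι : Type*} (s : Finset ι) (a b c d : ι → Fin v) :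
    IsChain3 fun X Y Z W => ∑ k ∈ s, -sortedTetChain (a k) (b k) (c k) (d k) X Y Z W := by
  refine ⟨fun X Y Z W => ?_, fun X Y Z W => ?_, fun X Y Z W => ?_, Set.toFinite _⟩ <;>
    simp only [← Finset.sum_neg_distrib] <;> refine Finset.sum_congr rfl fun k _ => ?_
  exacts [by rw [sortedTetChain_swap₀₁], by rw [sortedTetChain_swap₁₂],
    by rw [sortedTetChain_swap₂₃]]

/-- `∏ x ∈ t, ltSign A x` is the sign of the permutation sorting `A` into the face `t`. -/
theorem sortedTetChain_of_eq_insert {a b c d A : Fin v} {t : Finset (Fin v)}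
    (ht : ({a, b, c, d} : Finset (Fin v)) = insert A t) (hA : A ∉ t) (X Y Z : Fin v) :
    sortedTetChain a b c d A X Y Z = (∏ x ∈ t, ltSign A x) * sortedTriChain t X Y Z := by
  rw [sortedTetChain_eq_ite, sortedTriChain_eq_ite]
  by_cases h : ({X, Y, Z} : Finset (Fin v)) = t ∧ X ≠ Y ∧ X ≠ Z ∧ Y ≠ Z
  · obtain ⟨rfl, hXY, hXZ, hYZ⟩ := h
    simp only [Finset.mem_insert, Finset.mem_singleton, not_or] at hA
    obtain ⟨hAX, hAY, hAZ⟩ := hA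
    rw [if_pos ⟨ht.symm, hAX, hAY, hAZ, hXY, hXZ, hYZ⟩, if_pos ⟨rfl, hXY, hXZ, hYZ⟩,
      Finset.prod_insert (by simp [hXY, hXZ]), Finset.prod_insert (by simp [hYZ]),
      Finset.prod_singleton]
    ring
  · rw [if_neg h, mul_zero, if_neg]
    rintro ⟨hset, hAX, hAY, hAZ, hXY, hXZ, hYZ⟩
    have hA' : A ∉ ({X, Y, Z} : Finset (Fin v)) := by simp [hAX, hAY, hAZ]
    refine h ⟨?_, hXY, hXZ, hYZ⟩
    rw [← Finset.erase_insert hA', ← Finset.erase_insert hA, ← ht, hset]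

theorem sum_sortedTetChain {a b c d : Fin v} (hab : a < b) (hbc : b < c) (hcd : c < d)
    (X Y Z : Fin v) :
    ∑ A, sortedTetChain a b c d A X Y Z =
      sortedTriChain {b, c, d} X Y Z - sortedTriChain {a, c, d} X Y Z +
        sortedTriChain {a, b, d} X Y Z - sortedTriChain {a, b, c} X Y Z := by
  have hac := hab.trans hbc
  have hbd := hbc.trans hcd
  have had := hac.trans hcd
  have hsupp : ∀ A ∉ ({a, b, c, d} : Finset (Fin v)), sortedTetChain a b c d A X Y Z = 0 :=
    fun A hA => by
      rw [sortedTetChain_eq_ite, if_neg]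
      exact fun h => hA (h.1 ▸ Finset.mem_insert_self A _)
  rw [← Finset.sum_subset (Finset.subset_univ _) fun A _ hA => hsupp A hA,
    Finset.sum_insert (by simp [hab.ne, hac.ne, had.ne]),
    Finset.sum_insert (by simp [hbc.ne, hbd.ne]), Finset.sum_pair hcd.ne,
    sortedTetChain_of_eq_insert rfl (by simp [hab.ne, hac.ne, had.ne]),
    sortedTetChain_of_eq_insert (Finset.insert_comm _ _ _) (by simp [hab.ne', hbc.ne, hbd.ne]),
    sortedTetChain_of_eq_insert (t := {a, b, d})
      (by ext; simp only [Finset.mem_insert, Finset.mem_singleton]; tauto)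
      (by simp [hac.ne', hbc.ne', hcd.ne]),
    sortedTetChain_of_eq_insert (t := {a, b, c})
      (by ext; simp only [Finset.mem_insert, Finset.mem_singleton]; tauto)
      (by simp [had.ne', hbd.ne', hcd.ne'])]
  simp only [Finset.prod_insert, Finset.prod_singleton, Finset.mem_insert, Finset.mem_singleton,
    hab.ne, hac.ne, had.ne, hbc.ne, hbd.ne, hcd.ne, or_self, not_false_eq_true,
    ltSign_of_lt, ltSign_of_gt, hab, hac, had, hbc, hbd, hcd]
  ring

theorem not_isSide_of_lt_of_lt {x y z w : Fin v} (hxy : x < y) (hyz : y < z)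
    (hw : w < x ∨ z < w) : ¬IsSide v {x, z} := by
  rintro ⟨i, j, hij, hside⟩
  have hx : x ∈ ({i, j} : Finset (Fin v)) := hij ▸ Finset.mem_insert_self x {z}
  have hz : z ∈ ({i, j} : Finset (Fin v)) :=
    hij ▸ Finset.mem_insert_of_mem (Finset.mem_singleton_self z)
  simp only [Finset.mem_insert, Finset.mem_singleton] at hx hz
  have := w.isLt
  simp only [Fin.lt_def, Fin.ext_iff] at hxy hyz hw hx hz
  omega

/-- The diagonal `{b, d}` crosses `{a, c}`, which is an edge of the triangle `{a, b, c}`. -/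
theorem IsPolygonTriangulation.flip_not_mem {T : Finset (Finset (Fin v))}
    (hT : IsPolygonTriangulation v T) {a b c d : Fin v} (hab : a < b) (hbc : b < c)
    (hcd : c < d) (habc : {a, b, c} ∈ T) : {a, b, d} ∉ T ∧ {b, c, d} ∉ T := by
  obtain ⟨-, D, hD, hmem⟩ := hT
  have hac_mem : {a, c} ∈ D := by
    obtain ⟨x, y, z, hxy, hyz, hxyz, -, -, hxz⟩ := (hmem _).1 habc
    obtain ⟨rfl, rfl, rfl⟩ := eq_of_sorted_triple_eq hxyz.symm hxy hyz hab hbc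
    exact hxz.resolve_right (not_isSide_of_lt_of_lt hab hbc (.inr hcd))
  have hbd : ¬IsPolyEdge v D {b, d} := by
    rintro (hbd_mem | hbd_side)
    · exact hD.2.1 _ hac_mem _ hbd_mem ⟨a, b, c, d, hab, hbc, hcd, .inl ⟨rfl, rfl⟩⟩
    · exact not_isSide_of_lt_of_lt hbc hcd (.inl hab) hbd_side
  constructor
  · intro habd
    obtain ⟨x, y, z, hxy, hyz, hxyz, -, hyz_edge, -⟩ := (hmem _).1 habd
    obtain ⟨rfl, rfl, rfl⟩ := eq_of_sorted_triple_eq hxyz.symm hxy hyz hab (hbc.trans hcd)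
    exact hbd hyz_edge
  · intro hbcd
    obtain ⟨x, y, z, hxy, hyz, hxyz, -, -, hxz_edge⟩ := (hmem _).1 hbcd
    obtain ⟨rfl, rfl, rfl⟩ := eq_of_sorted_triple_eq hxyz.symm hxy hyz hbc hcd
    exact hbd hxz_edge

theorem polyChain_flip {T : Finset (Finset (Fin v))} (hT : IsPolygonTriangulation v T)
    {a b c d : Fin v} (hab : a < b) (hbc : b < c) (hcd : c < d) (habc : {a, b, c} ∈ T)
    (hacd : {a, c, d} ∈ T) (X Y Z : Fin v) :
    polyChain ((T \ {{a, b, c}, {a, c, d}}) ∪ {{a, b, d}, {b, c, d}}) X Y Z =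
      polyChain T X Y Z - sortedTriChain {a, b, c} X Y Z - sortedTriChain {a, c, d} X Y Z +
        sortedTriChain {a, b, d} X Y Z + sortedTriChain {b, c, d} X Y Z := by
  obtain ⟨habd, hbcd⟩ := hT.flip_not_mem hab hbc hcd habc
  have hne_old : ({a, b, c} : Finset (Fin v)) ≠ {a, c, d} := fun h => by
    have hd : d ∈ ({a, b, c} : Finset (Fin v)) := by simp [h]
    simp [(hab.trans (hbc.trans hcd)).ne', (hbc.trans hcd).ne', hcd.ne'] at hd
  have hne_new : ({a, b, d} : Finset (Fin v)) ≠ {b, c, d} := fun h => by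
    have ha : a ∈ ({b, c, d} : Finset (Fin v)) := by simp [← h]
    simp [hab.ne, (hab.trans hbc).ne, (hab.trans (hbc.trans hcd)).ne] at ha
  have hdisj : Disjoint (T \ {{a, b, c}, {a, c, d}}) {{a, b, d}, {b, c, d}} := by
    simp only [Finset.disjoint_right, Finset.mem_insert, Finset.mem_singleton, Finset.mem_sdiff]
    rintro t (rfl | rfl) ⟨ht, -⟩ <;> contradiction
  have hsub : {{a, b, c}, {a, c, d}} ⊆ T := Finset.insert_subset habc (by simpa using hacd)
  rw [polyChain, polyChain, Finset.sum_union hdisj, Finset.sum_sdiff_eq_sub hsub,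
    Finset.sum_pair hne_old, Finset.sum_pair hne_new]
  ring

theorem bdry3_sum_neg_sortedTetChain_of_flips {n : ℕ} {T : ℕ → Finset (Finset (Fin v))}
    {a b c d : ℕ → Fin v} (hT : ∀ k ≤ n, IsPolygonTriangulation v (T k))
    (hflip : ∀ k < n,
      a k < b k ∧ b k < c k ∧ c k < d k ∧
      ({a k, b k, c k} : Finset (Fin v)) ∈ T k ∧
      ({a k, c k, d k} : Finset (Fin v)) ∈ T k ∧
      T (k + 1) =
        (T k \ {({a k, b k, c k} : Finset (Fin v)), {a k, c k, d k}}) ∪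
          {({a k, b k, d k} : Finset (Fin v)), {b k, c k, d k}}) :
    bdry3 (fun X Y Z W =>
        ∑ k ∈ Finset.range n, -sortedTetChain (a k) (b k) (c k) (d k) X Y Z W) =
      fun X Y Z => polyChain (T 0) X Y Z - polyChain (T n) X Y Z := by
  funext X Y Z
  rw [bdry3, finsum_eq_sum_of_fintype, Finset.sum_comm,
    ← Finset.sum_range_sub' (fun k => polyChain (T k) X Y Z)]
  refine Finset.sum_congr rfl fun k hk => ?_
  obtain ⟨hab, hbc, hcd, habc, hacd, hnext⟩ := hflip k (Finset.mem_range.1 hk)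
  rw [Finset.sum_neg_distrib, sum_sortedTetChain hab hbc hcd, hnext,
    polyChain_flip (hT k (Finset.mem_range.1 hk).le) hab hbc hcd habc hacd]
  ring

theorem abs_sortedTetChain_le_one (a b c d X Y Z W : Fin v) :
    |sortedTetChain a b c d X Y Z W| ≤ 1 := by
  have habs : ∀ x y : Fin v, |ltSign x y| = 1 := fun x y => by
    unfold ltSign; split_ifs <;> simp
  rw [sortedTetChain_eq_ite]
  split_ifs
  · simp only [abs_mul, habs, mul_one, le_refl]
  · simp

def distinctQuadruples : Finset (Fin 4 × Fin 4 × Fin 4 × Fin 4) :=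
  Finset.univ.filter fun q => q.1 ≠ q.2.1 ∧ q.1 ≠ q.2.2.1 ∧ q.1 ≠ q.2.2.2 ∧
    q.2.1 ≠ q.2.2.1 ∧ q.2.1 ≠ q.2.2.2 ∧ q.2.2.1 ≠ q.2.2.2

theorem card_distinctQuadruples : distinctQuadruples.card = 24 := by decide

theorem mem_image_of_sortedTetChain_ne_zero {a b c d X Y Z W : Fin v}
    (h : sortedTetChain a b c d X Y Z W ≠ 0) :
    (X, Y, Z, W) ∈ distinctQuadruples.image fun q => (![a, b, c, d] q.1, ![a, b, c, d] q.2.1,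
      ![a, b, c, d] q.2.2.1, ![a, b, c, d] q.2.2.2) := by
  rw [sortedTetChain_eq_ite] at h
  obtain ⟨hset, hXY, hXZ, hXW, hYZ, hYW, hZW⟩ := (ite_ne_right_iff.1 h).1
  have index : ∀ x ∈ ({X, Y, Z, W} : Finset (Fin v)), ∃ i : Fin 4, ![a, b, c, d] i = x := by
    intro x hx
    rw [hset] at hx
    simp only [Finset.mem_insert, Finset.mem_singleton] at hx
    rcases hx with rfl | rfl | rfl | rfl
    exacts [⟨0, rfl⟩, ⟨1, rfl⟩, ⟨2, rfl⟩, ⟨3, rfl⟩]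
  obtain ⟨i, rfl⟩ := index X (by simp)
  obtain ⟨j, rfl⟩ := index Y (by simp)
  obtain ⟨k, rfl⟩ := index Z (by simp)
  obtain ⟨l, rfl⟩ := index W (by simp)
  refine Finset.mem_image.2 ⟨(i, j, k, l), Finset.mem_filter.2 ⟨Finset.mem_univ _, ?_⟩, rfl⟩
  exact ⟨ne_of_apply_ne _ hXY, ne_of_apply_ne _ hXZ, ne_of_apply_ne _ hXW,
    ne_of_apply_ne _ hYZ, ne_of_apply_ne _ hYW, ne_of_apply_ne _ hZW⟩

theorem sum_abs_sortedTetChain_le (a b c d : Fin v) :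
    ∑ t : Fin v × Fin v × Fin v × Fin v,
      |(sortedTetChain a b c d t.1 t.2.1 t.2.2.1 t.2.2.2 : ℚ)| ≤ 24 := by
  set S := distinctQuadruples.image fun q => (![a, b, c, d] q.1, ![a, b, c, d] q.2.1,
    ![a, b, c, d] q.2.2.1, ![a, b, c, d] q.2.2.2)
  calc _ = ∑ t ∈ S, |(sortedTetChain a b c d t.1 t.2.1 t.2.2.1 t.2.2.2 : ℚ)| := by
        refine (Finset.sum_subset (Finset.subset_univ S) fun t _ ht => ?_).symm
        rw [abs_eq_zero, Int.cast_eq_zero]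
        exact not_not.1 fun h => ht (mem_image_of_sortedTetChain_ne_zero h)
    _ ≤ ∑ _t ∈ S, (1 : ℚ) := by
        gcongr with t
        exact_mod_cast abs_sortedTetChain_le_one a b c d _ _ _ _
    _ ≤ 24 := by
        rw [Finset.sum_const, nsmul_one]
        exact_mod_cast card_distinctQuadruples ▸ Finset.card_image_le

theorem l1norm3_sum_neg_sortedTetChain_le {ι : Type*} (s : Finset ι) (a b c d : ι → Fin v) :
    l1norm3 (fun X Y Z W => ∑ k ∈ s, -sortedTetChain (a k) (b k) (c k) (d k) X Y Z W) ≤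
      s.card := by
  rw [l1norm3, finsum_eq_sum_of_fintype, div_le_iff₀ (by norm_num)]
  calc _ ≤ ∑ t : Fin v × Fin v × Fin v × Fin v, ∑ k ∈ s,
          |(sortedTetChain (a k) (b k) (c k) (d k) t.1 t.2.1 t.2.2.1 t.2.2.2 : ℚ)| := by
        gcongr with t
        push_cast
        exact (Finset.abs_sum_le_sum_abs _ _).trans_eq (by simp only [abs_neg])
    _ = ∑ k ∈ s, ∑ t : Fin v × Fin v × Fin v × Fin v,
          |(sortedTetChain (a k) (b k) (c k) (d k) t.1 t.2.1 t.2.2.1 t.2.2.2 : ℚ)| :=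
        Finset.sum_comm
    _ ≤ ∑ _k ∈ s, (24 : ℚ) := by
        gcongr with k
        exact sum_abs_sortedTetChain_le _ _ _ _
    _ = s.card * 24 := by rw [Finset.sum_const, nsmul_eq_mul]

end Polygon

/-- Flip paths beget tetrations.  Let `T 0, T 1, …, T n` be
triangulations of the convex `v`-gon such that each `T (k+1)` is obtained from
`T k` by a flip, the `k`-th flip replacing the triangles `{a k, b k, c k}` and
`{a k, c k, d k}` (with `a k < b k < c k < d k`) by `{a k, b k, d k}` and
`{b k, c k, d k}`.  Then the 3-chain `τ := Σ_{k<n} (−[a k, b k, c k, d k])`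
satisfies `∂τ = σ_{T 0} − σ_{T n}` and `‖τ‖₁ ≤ n`.  Consequently, for every good
volume potential `ρ` on `{0, …, v−1}`, `n ≥ ρ(σ_{T 0}) − ρ(σ_{T n})`. -/
theorem flip_paths_beget_tetrations (v n : ℕ)
    (T : ℕ → Finset (Finset (Fin v))) (a b c d : ℕ → Fin v)
    (hT : ∀ k ≤ n, IsPolygonTriangulation v (T k))
    (hflip : ∀ k < n,
      a k < b k ∧ b k < c k ∧ c k < d k ∧
      ({a k, b k, c k} : Finset (Fin v)) ∈ T k ∧
      ({a k, c k, d k} : Finset (Fin v)) ∈ T k ∧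
      T (k + 1) =
        (T k \ {({a k, b k, c k} : Finset (Fin v)), {a k, c k, d k}}) ∪
          {({a k, b k, d k} : Finset (Fin v)), {b k, c k, d k}}) :
    (bdry3 (fun X Y Z W =>
        ∑ k ∈ Finset.range n, -sortedTetChain (a k) (b k) (c k) (d k) X Y Z W) =
      fun X Y Z => polyChain (T 0) X Y Z - polyChain (T n) X Y Z) ∧
    l1norm3 (fun X Y Z W =>
        ∑ k ∈ Finset.range n, -sortedTetChain (a k) (b k) (c k) (d k) X Y Z W) ≤ n ∧
    (∀ P : VolumePotential (Fin v), P.Good →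
      P.eval2 (polyChain (T 0)) - P.eval2 (polyChain (T n)) ≤ (n : ℚ)) := by
  have hbdry := bdry3_sum_neg_sortedTetChain_of_flips hT hflip
  have hnorm := l1norm3_sum_neg_sortedTetChain_le (Finset.range n) a b c d
  rw [Finset.card_range] at hnorm
  have hτ := isChain3_sum_neg_sortedTetChain (Finset.range n) a b c d
  refine ⟨hbdry, hnorm, fun P hP => ?_⟩
  calc P.eval2 (polyChain (T 0)) - P.eval2 (polyChain (T n))
      = P.eval2 (bdry3 _) := by rw [hbdry, P.eval2_sub]
    _ = P.eval3 _ := (P.eval3_eq_eval2_bdry3 hτ).symm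
    _ ≤ l1norm3 _ := P.eval3_le_l1norm3 hP hτ
    _ ≤ n := hnorm
end
end
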